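/- arXiv:2204.05175 — 4 statements merged into one kernel-verified Lean document; each statement's English description precedes it below -/
import Mathlib

section
/- Under Assumption 1, the set B = {β ∈ ℝ^p : Y₀ ⪰cx X₀'β} contains the origin 0_p, is convex, is compact, and is contained in the ellipsoid B^V = {β ∈ ℝ^p : β' Var(X) β ≤ Var(Y)}. -/
/-!
Write `B = {β | Y₀ ⪰cx ⟪β, X₀⟫}`. Since `β ↦ ⟪β, X₀⟫` is linear, convexity of `B` follows from
convexity of each test function `φ`, and closedness from Fatou's lemma applied to `φ` minus an
affine minorant (all the `⟪β, X₀⟫` have mean zero, so the affine part integrates to a constant).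
Jensen's inequality puts `0` in `B`, and the test function `x ↦ x²` gives
`β' Var(X) β ≤ Var(Y)`. As `Var(X)` is positive semidefinite and nonsingular, hence positive
definite, this ellipsoid is bounded, so the closed set `B` is compact.
-/

open MeasureTheory ProbabilityTheory Filter Set

noncomputable section

variable {Ω : Type*} [MeasurableSpace Ω]

/-- The centered version `A₀ = A - E[A]` of a real random variable. -/
def cent (μ : Measure Ω) (f : Ω → ℝ) : Ω → ℝ := fun ω => f ω - ∫ ω', f ω' ∂μ

/-- The centered version `X₀ = X - E[X]` of an `ℝ^p`-valued random vector. -/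
def centV {p : ℕ} (μ : Measure Ω) (X : Ω → EuclideanSpace ℝ (Fin p)) :
    Ω → EuclideanSpace ℝ (Fin p) := fun ω => X ω - ∫ ω', X ω' ∂μ

/-- Euclidean inner product `x'y`. -/
def dotp {p : ℕ} (x y : EuclideanSpace ℝ (Fin p)) : ℝ := ∑ i, x i * y i

/-- `A` dominates `B` in the convex order: for every convex `φ : ℝ → ℝ`,
`E[φ(B)] ≤ E[φ(A)]`, where both expectations are well defined in `(-∞, +∞]`
(any convex `φ` is bounded below by an affine function, so for a random variable
with finite mean the expectation is `+∞` exactly when `φ ∘ ·` is not integrable). -/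
def ConvexOrdGE (μ : Measure Ω) (A B : Ω → ℝ) : Prop :=
  ∀ φ : ℝ → ℝ, ConvexOn ℝ Set.univ φ →
    Integrable (fun ω => φ (A ω)) μ →
      Integrable (fun ω => φ (B ω)) μ ∧ ∫ ω, φ (B ω) ∂μ ≤ ∫ ω, φ (A ω) ∂μ

/-- The cumulative distribution function of a real random variable. -/
def cdfRV (μ : Measure Ω) (A : Ω → ℝ) : ℝ → ℝ := fun t => (μ {ω | A ω ≤ t}).toReal

/-- Generalized inverse (quantile function) `F⁻¹(t) = inf {x : t ≤ F x}` of a cdf. -/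
def qf (F : ℝ → ℝ) : ℝ → ℝ := fun t => sInf {x | t ≤ F x}

/-- The ratio of integrated quantiles `R(α, F, G)`. -/
def Rratio (α : ℝ) (F G : ℝ → ℝ) : ℝ := (∫ t in α..1, qf F t) / (∫ t in α..1, qf G t)

/-- `S(F, G) = inf_{α ∈ (0,1)} R(α, F, G)`. -/
def Sinf (F G : ℝ → ℝ) : ℝ := sInf {r | ∃ α ∈ Set.Ioo (0:ℝ) 1, r = Rratio α F G}

/-- `S_ε(F, G) = min_{α ∈ [ε, 1-ε]} R(α, F, G)`. -/
def Seps (ε : ℝ) (F G : ℝ → ℝ) : ℝ := sInf {r | ∃ α ∈ Set.Icc ε (1 - ε), r = Rratio α F G}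

/-- The covariance matrix `Var(X)` of an `ℝ^p`-valued random vector. -/
def covMatrix {p : ℕ} (μ : Measure Ω) (X : Ω → EuclideanSpace ℝ (Fin p)) :
    Matrix (Fin p) (Fin p) ℝ :=
  Matrix.of fun i j =>
    ∫ ω, (X ω i - ∫ ω', X ω' i ∂μ) * (X ω j - ∫ ω', X ω' j ∂μ) ∂μ

/-- The identified set `B = {β ∈ ℝ^p : Y₀ ⪰cx X₀'β}`. -/
def Bset {p : ℕ} (μ : Measure Ω) (Y : Ω → ℝ) (X : Ω → EuclideanSpace ℝ (Fin p)) :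
    Set (EuclideanSpace ℝ (Fin p)) :=
  {β | ConvexOrdGE μ (cent μ Y) (fun ω => dotp (centV μ X ω) β)}

/-- The regularized outer set `B_ε = {λ q : q ∈ S_p, 0 ≤ λ ≤ S_ε(F_{Y₀}, F_{X₀'q})}`. -/
def BepsSet {p : ℕ} (μ : Measure Ω) (Y : Ω → ℝ) (X : Ω → EuclideanSpace ℝ (Fin p)) (ε : ℝ) :
    Set (EuclideanSpace ℝ (Fin p)) :=
  {x | ∃ (q : EuclideanSpace ℝ (Fin p)) (l : ℝ), ‖q‖ = 1 ∧ 0 ≤ l ∧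
    l ≤ Seps ε (cdfRV μ (cent μ Y)) (cdfRV μ (fun ω => dotp (centV μ X ω) q)) ∧ x = l • q}

open scoped InnerProductSpace Matrix Topology

theorem ConvexOn.add_rightDeriv_mul_sub_le {S : Set ℝ} {f : ℝ → ℝ} (hf : ConvexOn ℝ S f)
    {x y : ℝ} (hx : x ∈ interior S) (hy : y ∈ S) :
    f x + derivWithin f (Ioi x) x * (y - x) ≤ f y := by
  rcases lt_trichotomy x y with hxy | rfl | hyx
  · have h := hf.rightDeriv_le_slope_of_mem_interior hx hy hxy
    rw [slope_def_field, le_div_iff₀ (sub_pos.2 hxy)] at h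
    linarith
  · simp
  · have hleft := hf.slope_le_leftDeriv_of_mem_interior hy hx hyx
    have hleft_le_right := hf.leftDeriv_le_rightDeriv_of_mem_interior hx
    rw [slope_def_field, div_le_iff₀ (sub_pos.2 hyx)] at hleft
    nlinarith

theorem ConvexOn.continuous_of_univ {f : ℝ → ℝ} (hf : ConvexOn ℝ univ f) : Continuous f :=
  continuousOn_univ.mp (hf.continuousOn isOpen_univ)

section Fatou

variable {μ : Measure Ω}

theorem integrable_and_integral_le_of_tendsto {f : ℕ → Ω → ℝ} {g : Ω → ℝ} {D : ℝ}
    (hf_nonneg : ∀ n, 0 ≤ᵐ[μ] f n) (hf : ∀ n, Integrable (f n) μ)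
    (hf_le : ∀ n, ∫ ω, f n ω ∂μ ≤ D)
    (hlim : ∀ᵐ ω ∂μ, Tendsto (fun n => f n ω) atTop (𝓝 (g ω))) :
    Integrable g μ ∧ ∫ ω, g ω ∂μ ≤ D := by
  have hg_meas : AEStronglyMeasurable g μ :=
    aestronglyMeasurable_of_tendsto_ae _ (fun n => (hf n).aestronglyMeasurable) hlim
  have hg_nonneg : 0 ≤ᵐ[μ] g := by
    filter_upwards [hlim, ae_all_iff.2 hf_nonneg] with ω hω hω0
    exact ge_of_tendsto' hω hω0
  have hD : 0 ≤ D := (integral_nonneg_of_ae (hf_nonneg 0)).trans (hf_le 0)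
  have hlintegral : ∫⁻ ω, ENNReal.ofReal (g ω) ∂μ ≤ ENNReal.ofReal D :=
    calc ∫⁻ ω, ENNReal.ofReal (g ω) ∂μ
        = ∫⁻ ω, liminf (fun n => ENNReal.ofReal (f n ω)) atTop ∂μ := by
          refine lintegral_congr_ae ?_
          filter_upwards [hlim] with ω hω
          exact ((ENNReal.continuous_ofReal.tendsto _).comp hω).liminf_eq.symm
      _ ≤ liminf (fun n => ∫⁻ ω, ENNReal.ofReal (f n ω) ∂μ) atTop :=
          lintegral_liminf_le' fun n => (hf n).aemeasurable.ennreal_ofReal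
      _ ≤ ENNReal.ofReal D := by
          refine liminf_le_of_frequently_le (Frequently.of_forall fun n => ?_)
          rw [← ofReal_integral_eq_lintegral_ofReal (hf n) (hf_nonneg n)]
          exact ENNReal.ofReal_le_ofReal (hf_le n)
  refine ⟨⟨hg_meas, (hasFiniteIntegral_iff_ofReal hg_nonneg).2
    (hlintegral.trans_lt ENNReal.ofReal_lt_top)⟩, ?_⟩
  rw [integral_eq_lintegral_of_nonneg_ae hg_nonneg hg_meas]
  exact ENNReal.toReal_le_of_le_ofReal hD hlintegral

end Fatou

section ConvexOrder

variable {μ : Measure Ω} {A B : Ω → ℝ}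

theorem convexOrdGE_const_integral [IsProbabilityMeasure μ] (hA : Integrable A μ) :
    ConvexOrdGE μ A (fun _ => ∫ ω, A ω ∂μ) := by
  intro φ hφ hφA
  refine ⟨integrable_const _, ?_⟩
  simpa using hφ.map_integral_le hφ.continuous_of_univ.continuousOn isClosed_univ
    (ae_of_all _ fun _ => mem_univ _) hA hφA

theorem ConvexOrdGE.integral_sq_le (h : ConvexOrdGE μ A B) (hA : MemLp A 2 μ) :
    ∫ ω, B ω ^ 2 ∂μ ≤ ∫ ω, A ω ^ 2 ∂μ :=
  (h (fun x => x ^ 2) (even_two.convexOn_pow) hA.integrable_sq).2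

theorem ConvexOrdGE.convex_combination [IsFiniteMeasure μ] {B₁ B₂ : Ω → ℝ}
    (h₁ : ConvexOrdGE μ A B₁) (h₂ : ConvexOrdGE μ A B₂)
    (hB₁ : Integrable B₁ μ) (hB₂ : Integrable B₂ μ) {a b : ℝ} (ha : 0 ≤ a) (hb : 0 ≤ b)
    (hab : a + b = 1) : ConvexOrdGE μ A (fun ω => a * B₁ ω + b * B₂ ω) := by
  intro φ hφ hφA
  obtain ⟨hφB₁, hle₁⟩ := h₁ φ hφ hφA
  obtain ⟨hφB₂, hle₂⟩ := h₂ φ hφ hφA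
  set m := derivWithin φ (Ioi 0) 0
  have hupper : ∀ ω, φ (a * B₁ ω + b * B₂ ω) ≤ a * φ (B₁ ω) + b * φ (B₂ ω) := fun ω => by
    simpa using hφ.2 (mem_univ (B₁ ω)) (mem_univ (B₂ ω)) ha hb hab
  have hupper_int : Integrable (fun ω => a * φ (B₁ ω) + b * φ (B₂ ω)) μ :=
    (hφB₁.const_mul a).add (hφB₂.const_mul b)
  have hint : Integrable (fun ω => φ (a * B₁ ω + b * B₂ ω)) μ := by
    refine integrable_of_le_of_le (g₁ := fun ω => φ 0 + m * (a * B₁ ω + b * B₂ ω))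
      (hφ.continuous_of_univ.comp_aestronglyMeasurable
        ((hB₁.const_mul a).add (hB₂.const_mul b)).aestronglyMeasurable)
      (ae_of_all _ fun ω => ?_) (ae_of_all _ hupper)
      ((integrable_const _).add (((hB₁.const_mul a).add (hB₂.const_mul b)).const_mul m))
      hupper_int
    simpa using hφ.add_rightDeriv_mul_sub_le (x := 0) (by simp) (mem_univ (a * B₁ ω + b * B₂ ω))
  refine ⟨hint, ?_⟩
  calc ∫ ω, φ (a * B₁ ω + b * B₂ ω) ∂μ
      ≤ ∫ ω, (a * φ (B₁ ω) + b * φ (B₂ ω)) ∂μ := integral_mono hint hupper_int hupper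
    _ = a * ∫ ω, φ (B₁ ω) ∂μ + b * ∫ ω, φ (B₂ ω) ∂μ := by
        rw [integral_add (hφB₁.const_mul a) (hφB₂.const_mul b), integral_const_mul,
          integral_const_mul]
    _ ≤ a * ∫ ω, φ (A ω) ∂μ + b * ∫ ω, φ (A ω) ∂μ := by gcongr
    _ = ∫ ω, φ (A ω) ∂μ := by rw [← add_mul, hab, one_mul]

theorem ConvexOrdGE.of_tendsto [IsFiniteMeasure μ] {Bs : ℕ → Ω → ℝ}
    (h : ∀ n, ConvexOrdGE μ A (Bs n)) (hBs : ∀ n, Integrable (Bs n) μ) (hB : Integrable B μ)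
    (hmean : ∀ n, ∫ ω, Bs n ω ∂μ = ∫ ω, B ω ∂μ)
    (hlim : ∀ᵐ ω ∂μ, Tendsto (fun n => Bs n ω) atTop (𝓝 (B ω))) : ConvexOrdGE μ A B := by
  intro φ hφ hφA
  set ℓ : ℝ → ℝ := fun x => φ 0 + derivWithin φ (Ioi 0) 0 * x
  have hℓ_le : ∀ x, ℓ x ≤ φ x := fun x => by
    simpa using hφ.add_rightDeriv_mul_sub_le (x := 0) (by simp) (mem_univ x)
  have hℓ_int : ∀ {C : Ω → ℝ}, Integrable C μ → Integrable (fun ω => ℓ (C ω)) μ :=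
    fun hC => (integrable_const _).add (hC.const_mul _)
  have hℓ_integral : ∀ n, ∫ ω, ℓ (Bs n ω) ∂μ = ∫ ω, ℓ (B ω) ∂μ := fun n => by
    rw [integral_add (integrable_const _) ((hBs n).const_mul _),
      integral_add (integrable_const _) (hB.const_mul _), integral_const_mul,
      integral_const_mul, hmean n]
  have hℓ_cont : Continuous ℓ := by fun_prop
  obtain ⟨hgap_int, hgap_le⟩ := integrable_and_integral_le_of_tendsto
    (f := fun n ω => φ (Bs n ω) - ℓ (Bs n ω)) (g := fun ω => φ (B ω) - ℓ (B ω))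
    (D := ∫ ω, φ (A ω) ∂μ - ∫ ω, ℓ (B ω) ∂μ)
    (fun n => ae_of_all _ fun ω => sub_nonneg.2 (hℓ_le _))
    (fun n => (h n φ hφ hφA).1.sub (hℓ_int (hBs n)))
    (fun n => by
      rw [integral_sub (h n φ hφ hφA).1 (hℓ_int (hBs n)), hℓ_integral n]
      linarith [(h n φ hφ hφA).2])
    (hlim.mono fun ω hω =>
      ((hφ.continuous_of_univ.tendsto _).comp hω).sub ((hℓ_cont.tendsto _).comp hω))
  have hφB : Integrable (fun ω => φ (B ω)) μ := by
    refine (hgap_int.add (hℓ_int hB)).congr (ae_of_all _ fun ω => ?_)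
    simp
  refine ⟨hφB, ?_⟩
  rw [integral_sub hφB (hℓ_int hB)] at hgap_le
  linarith

end ConvexOrder

section InnerProduct

variable {E : Type*} [NormedAddCommGroup E] [InnerProductSpace ℝ E]
  {μ : Measure Ω} {A : Ω → ℝ} {Z : Ω → E}

theorem zero_mem_setOf_convexOrdGE_inner [IsProbabilityMeasure μ] (hA : Integrable A μ)
    (hA₀ : ∫ ω, A ω ∂μ = 0) : (0 : E) ∈ {β | ConvexOrdGE μ A fun ω => ⟪β, Z ω⟫_ℝ} := by
  simpa [hA₀] using convexOrdGE_const_integral hA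

theorem convex_setOf_convexOrdGE_inner [IsFiniteMeasure μ] (hZ : Integrable Z μ) :
    Convex ℝ {β | ConvexOrdGE μ A fun ω => ⟪β, Z ω⟫_ℝ} := by
  intro β₁ h₁ β₂ h₂ a b ha hb hab
  simpa [inner_add_left, inner_smul_left] using
    h₁.convex_combination h₂ (hZ.const_inner β₁) (hZ.const_inner β₂) ha hb hab

theorem isClosed_setOf_convexOrdGE_inner [CompleteSpace E] [IsFiniteMeasure μ]
    (hZ : Integrable Z μ) (hZ₀ : ∫ ω, Z ω ∂μ = 0) :
    IsClosed {β | ConvexOrdGE μ A fun ω => ⟪β, Z ω⟫_ℝ} := by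
  have hmean : ∀ β : E, ∫ ω, ⟪β, Z ω⟫_ℝ ∂μ = 0 := fun β => by
    rw [integral_inner hZ, hZ₀, inner_zero_right]
  refine IsSeqClosed.isClosed fun βs β hβs hlim => ?_
  refine ConvexOrdGE.of_tendsto hβs (fun n => hZ.const_inner _) (hZ.const_inner _)
    (fun n => by rw [hmean, hmean]) (ae_of_all _ fun ω => ?_)
  exact ((continuous_id.inner continuous_const).tendsto β).comp hlim

theorem setOf_convexOrdGE_inner_subset (hA : MemLp A 2 μ) :
    {β | ConvexOrdGE μ A fun ω => ⟪β, Z ω⟫_ℝ} ⊆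
      {β | ∫ ω, ⟪β, Z ω⟫_ℝ ^ 2 ∂μ ≤ ∫ ω, A ω ^ 2 ∂μ} :=
  fun _ hβ => hβ.integral_sq_le hA

end InnerProduct

theorem isBounded_setOf_le_of_sq_homogeneous {E : Type*} [NormedAddCommGroup E]
    [NormedSpace ℝ E] [ProperSpace E] {Q : E → ℝ} (hQ_cont : Continuous Q)
    (hQ_smul : ∀ (r : ℝ) x, Q (r • x) = r ^ 2 * Q x) (hQ_pos : ∀ x, x ≠ 0 → 0 < Q x) (c : ℝ) :
    Bornology.IsBounded {x | Q x ≤ c} := by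
  rcases subsingleton_or_nontrivial E with hE | hE
  · exact (Set.toFinite _).isBounded
  obtain ⟨u, hu, hu_min⟩ := (isCompact_sphere (0 : E) 1).exists_isMinOn
    (NormedSpace.sphere_nonempty.2 zero_le_one) hQ_cont.continuousOn
  have hu_pos : 0 < Q u := hQ_pos u (ne_zero_of_mem_unit_sphere ⟨u, hu⟩)
  have hQ_ge : ∀ x, ‖x‖ ^ 2 * Q u ≤ Q x := fun x => by
    rcases eq_or_ne x 0 with rfl | hx
    · simp [show Q 0 = 0 by simpa using hQ_smul 0 0]
    have hx_norm : 0 < ‖x‖ := norm_pos_iff.2 hx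
    have hmin : Q u ≤ Q (‖x‖⁻¹ • x) := hu_min (by simp [norm_smul, hx_norm.ne'])
    rw [hQ_smul] at hmin
    calc ‖x‖ ^ 2 * Q u ≤ ‖x‖ ^ 2 * (‖x‖⁻¹ ^ 2 * Q x) := by gcongr
      _ = Q x := by field_simp
  refine (Metric.isBounded_closedBall (x := (0 : E)) (r := √(c / Q u))).subset fun x hx => ?_
  rw [mem_closedBall_zero_iff, ← Real.sqrt_sq (norm_nonneg x)]
  exact Real.sqrt_le_sqrt ((le_div_iff₀ hu_pos).2 ((hQ_ge x).trans hx))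

theorem Matrix.dotProduct_mulVec_eq_sum_sum {n R : Type*} [Fintype n] [CommSemiring R]
    (M : Matrix n n R) (v : n → R) : v ⬝ᵥ M *ᵥ v = ∑ i, ∑ j, v i * M i j * v j := by
  simp [dotProduct, mulVec, Finset.mul_sum, mul_assoc]

theorem Matrix.PosDef.isBounded_setOf_sum_sum_le {n : Type*} [Fintype n] {M : Matrix n n ℝ}
    (hM : M.PosDef) (c : ℝ) :
    Bornology.IsBounded {x : EuclideanSpace ℝ n | ∑ i, ∑ j, x i * M i j * x j ≤ c} := by
  refine isBounded_setOf_le_of_sq_homogeneous (by fun_prop) (fun r x => ?_) (fun x hx => ?_) c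
  · simp only [PiLp.smul_apply, smul_eq_mul, Finset.mul_sum]
    exact Finset.sum_congr rfl fun i _ => Finset.sum_congr rfl fun j _ => by ring
  · have hx' : x.ofLp ≠ 0 := fun h => hx (by simpa using congrArg (WithLp.toLp 2) h)
    simpa [Matrix.dotProduct_mulVec_eq_sum_sum] using hM.dotProduct_mulVec_pos hx'

section Moments

variable {μ : Measure Ω} {p : ℕ} {Y : Ω → ℝ} {X : Ω → EuclideanSpace ℝ (Fin p)}

theorem dotp_eq_inner (x y : EuclideanSpace ℝ (Fin p)) : dotp x y = ⟪y, x⟫_ℝ := by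
  simp [dotp, PiLp.inner_apply]

theorem bset_eq_setOf_convexOrdGE_inner :
    Bset μ Y X = {β | ConvexOrdGE μ (cent μ Y) fun ω => ⟪β, centV μ X ω⟫_ℝ} := by
  simp only [Bset, dotp_eq_inner]

theorem integral_cent [IsProbabilityMeasure μ] (hY : Integrable Y μ) :
    ∫ ω, cent μ Y ω ∂μ = 0 := by
  simp [cent, integral_sub hY (integrable_const _)]

theorem integral_centV [IsProbabilityMeasure μ] (hX : Integrable X μ) :
    ∫ ω, centV μ X ω ∂μ = 0 := by
  simp [centV, integral_sub hX (integrable_const _)]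

theorem centV_apply (hX : Integrable X μ) (ω : Ω) (i : Fin p) :
    centV μ X ω i = X ω i - ∫ ω', X ω' i ∂μ := by
  simp [centV, eval_integral_piLp (integrable_piLp_iff.1 hX)]

theorem integral_inner_centV_sq [IsFiniteMeasure μ] (hX : MemLp X 2 μ)
    (β : EuclideanSpace ℝ (Fin p)) :
    ∫ ω, ⟪β, centV μ X ω⟫_ℝ ^ 2 ∂μ = ∑ i, ∑ j, β i * covMatrix μ X i j * β j := by
  set c : Fin p → Ω → ℝ := fun i ω => X ω i - ∫ ω', X ω' i ∂μ
  have hc : ∀ i, MemLp (c i) 2 μ := fun i => (memLp_piLp_iff.1 hX i).sub (memLp_const _)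
  have hterm : ∀ i j, Integrable (fun ω => β i * β j * (c i ω * c j ω)) μ := fun i j =>
    ((hc i).integrable_mul (hc j)).const_mul _
  have hexpand : ∀ ω, ⟪β, centV μ X ω⟫_ℝ ^ 2 = ∑ i, ∑ j, β i * β j * (c i ω * c j ω) :=
    fun ω => by
      simp only [← dotp_eq_inner, dotp, centV_apply (hX.integrable one_le_two), sq,
        Finset.sum_mul_sum]
      exact Finset.sum_congr rfl fun i _ => Finset.sum_congr rfl fun j _ => by ring
  simp_rw [hexpand]
  rw [integral_finsetSum _ fun i _ => integrable_finsetSum _ fun j _ => hterm i j]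
  refine Finset.sum_congr rfl fun i _ => ?_
  rw [integral_finsetSum _ fun j _ => hterm i j]
  refine Finset.sum_congr rfl fun j _ => ?_
  rw [integral_const_mul]
  simp only [covMatrix, Matrix.of_apply, c]
  ring

theorem covMatrix_posSemidef [IsFiniteMeasure μ] (hX : MemLp X 2 μ) :
    (covMatrix μ X).PosSemidef := by
  refine Matrix.PosSemidef.of_dotProduct_mulVec_nonneg ?_ fun v => ?_
  · ext i j
    simp [covMatrix, mul_comm]
  · rw [star_trivial, Matrix.dotProduct_mulVec_eq_sum_sum]
    simpa [← integral_inner_centV_sq hX (WithLp.toLp 2 v)] using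
      integral_nonneg fun ω => sq_nonneg ⟪WithLp.toLp 2 v, centV μ X ω⟫_ℝ

end Moments

theorem stmt2_general (μ : Measure Ω) [IsProbabilityMeasure μ] {p : ℕ}
    (Y : Ω → ℝ) (X : Ω → EuclideanSpace ℝ (Fin p))
    (hY2 : MemLp Y 2 μ) (hX2 : MemLp X 2 μ)
    (hVarX : (covMatrix μ X).det ≠ 0) :
    0 ∈ Bset μ Y X ∧ Convex ℝ (Bset μ Y X) ∧ IsCompact (Bset μ Y X) ∧
      Bset μ Y X ⊆ {β | ∑ i, ∑ j, β i * covMatrix μ X i j * β j ≤ variance Y μ} := by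
  have hX : Integrable X μ := hX2.integrable one_le_two
  have hY₀ : MemLp (cent μ Y) 2 μ := hY2.sub (memLp_const _)
  have hX₀ : Integrable (centV μ X) μ := hX.sub (integrable_const _)
  have hellipsoid : Bset μ Y X ⊆
      {β | ∑ i, ∑ j, β i * covMatrix μ X i j * β j ≤ variance Y μ} := by
    have hvar : variance Y μ = ∫ ω, cent μ Y ω ^ 2 ∂μ := variance_eq_integral hY2.aemeasurable
    rw [bset_eq_setOf_convexOrdGE_inner, hvar]
    simpa only [integral_inner_centV_sq hX2] using
      setOf_convexOrdGE_inner_subset (Z := centV μ X) hY₀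
  have hposDef := (covMatrix_posSemidef hX2).posDef_iff_det_ne_zero.2 hVarX
  refine ⟨?_, ?_, ?_, hellipsoid⟩
  · rw [bset_eq_setOf_convexOrdGE_inner]
    exact zero_mem_setOf_convexOrdGE_inner (hY₀.integrable one_le_two)
      (integral_cent (hY2.integrable one_le_two))
  · rw [bset_eq_setOf_convexOrdGE_inner]
    exact convex_setOf_convexOrdGE_inner hX₀
  · refine Metric.isCompact_of_isClosed_isBounded ?_
      ((hposDef.isBounded_setOf_sum_sum_le _).subset hellipsoid)
    rw [bset_eq_setOf_convexOrdGE_inner]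
    exact isClosed_setOf_convexOrdGE_inner hX₀ (integral_centV hX)

/-- Under Assumption 1, the identified set `B` contains the origin,
is convex, compact, and is contained in the ellipsoid `{β : β' Var(X) β ≤ Var(Y)}`. -/
theorem stmt2 (μ : Measure Ω) [IsProbabilityMeasure μ] {p : ℕ}
    (Y : Ω → ℝ) (X : Ω → EuclideanSpace ℝ (Fin p))
    (hYm : Measurable Y) (hXm : Measurable X)
    (hY2 : MemLp Y 2 μ) (hX2 : MemLp X 2 μ)
    (hVarY : 0 < variance Y μ) (hVarX : (covMatrix μ X).det ≠ 0)
    (α₀ : ℝ) (β₀ : EuclideanSpace ℝ (Fin p))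
    (hmod : μ[Y | MeasurableSpace.comap X inferInstance]
      =ᵐ[μ] fun ω => α₀ + dotp (X ω) β₀) :
    0 ∈ Bset μ Y X ∧ Convex ℝ (Bset μ Y X) ∧ IsCompact (Bset μ Y X) ∧
      Bset μ Y X ⊆ {β | ∑ i, ∑ j, β i * covMatrix μ X i j * β j ≤ variance Y μ} :=
  stmt2_general μ Y X hY2 hX2 hVarX
end
end

section
/- Suppose Assumption 1 holds with p = 1 (so X is real-valued), set U = Y₀ − X₀ β₀, and assume β₀ > 0. If there exists a convex function φ : ℝ → ℝ such that E[φ(λU)] < E[φ(λX)] = ∞ for all λ > 0, then β₀ = max{ b ∈ ℝ : Y₀ ⪰cx X₀ b }; in particular, β₀ is uniquely determined by the marginal distributions of Y and X together with the knowledge that β₀ > 0. -/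
/-!
`β₀` lies in the set by conditional Jensen, because `E[Y₀ | X] = X₀ β₀`. For maximality, suppose
`Y₀ ⪰cx X₀ b` with `b > β₀` and put `κ = b / (b - β₀)`. Then
`Y₀ = (β₀/b) (X₀ b) + (1 - β₀/b) (κ U)`, so for convex `ψ` of linear growth, convexity and the
convex order give `E ψ(X₀ b) ≤ (β₀/b) E ψ(X₀ b) + (1 - β₀/b) E ψ(κ U)`, that is
`E ψ(X₀ b) ≤ E ψ(κ U)`. Approximating `φ` from below by finite maxima of its affine minorants and
passing to the limit by monotone convergence yields `E φ(X₀ b) ≤ E φ(κ U) < ∞`; by convexity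
`φ(b X / 2)` is then integrable, contradicting `E φ(λ X) = ∞`.
-/

open MeasureTheory ProbabilityTheory Filter Set

noncomputable section

variable {Ω : Type*} [MeasurableSpace Ω]

open Topology

namespace ConvexOn

variable {φ : ℝ → ℝ}

theorem exists_affine_le_real_univ (hφ : ConvexOn ℝ univ φ) : ∃ a c : ℝ, ∀ t, a * t + c ≤ φ t := by
  obtain ⟨a, c, h⟩ := hφ.exists_affine_le_real isClosed_univ
    (hφ.locallyLipschitz.continuous.lowerSemicontinuous.lowerSemicontinuousOn _)
  exact ⟨a, c, fun t => h t trivial⟩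

theorem exists_nat_affine_le_iSup_eq (hφ : ConvexOn ℝ univ φ) :
    ∃ a c : ℕ → ℝ, (∀ i t, a i * t + c i ≤ φ t) ∧ ∀ t, ⨆ i, (a i * t + c i) = φ t := by
  obtain ⟨l, c, hle, hsup⟩ :=
    hφ.real_univ_sSup_of_nat_affine_eq hφ.locallyLipschitz.continuous.lowerSemicontinuous
  have hl : ∀ i t, l i 1 * t + c i = (l i + Function.const ℝ (c i)) t := fun i t => by
    rw [Pi.add_apply, Function.const_apply, mul_comm, ← smul_eq_mul, ← map_smul, smul_eq_mul,
      mul_one]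
  refine ⟨fun i => l i 1, c, fun i t => (hl i t).trans_le (hle i t), fun t => ?_⟩
  simp only [hl]
  rw [← iSup_apply]
  exact congrFun hsup t

theorem integrable_comp_midpoint {α : Type*} [MeasurableSpace α] {μ : Measure α}
    [IsFiniteMeasure μ] (hφ : ConvexOn ℝ univ φ) {W : α → ℝ} (hW : Integrable W μ)
    (hφW : Integrable (fun ω => φ (W ω)) μ) (c : ℝ) :
    Integrable (fun ω => φ ((W ω + c) / 2)) μ := by
  obtain ⟨a, a', hlow⟩ := hφ.exists_affine_le_real_univ
  have hmid : ∀ ω, φ ((W ω + c) / 2) ≤ φ (W ω) / 2 + φ c / 2 := fun ω => by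
    have hconv := hφ.2 (mem_univ (W ω)) (mem_univ c) (by norm_num : (0 : ℝ) ≤ 1 / 2)
      (by norm_num : (0 : ℝ) ≤ 1 / 2) (by norm_num)
    simp only [smul_eq_mul] at hconv
    rw [show (W ω + c) / 2 = 1 / 2 * W ω + 1 / 2 * c by ring]
    linarith
  have hmid_int : Integrable (fun ω => (W ω + c) / 2) μ := (hW.add (integrable_const c)).div_const 2
  exact integrable_of_le_of_le (hφ.locallyLipschitz.continuous.comp_aestronglyMeasurable hmid_int.1)
    (ae_of_all _ fun ω => hlow _) (ae_of_all _ hmid)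
    ((hmid_int.const_mul a).add (integrable_const a'))
    ((hφW.div_const 2).add (integrable_const _))

end ConvexOn

theorem convexOn_univ_affine (a c : ℝ) : ConvexOn ℝ univ fun t : ℝ => a * t + c :=
  ⟨convex_univ, fun x _ y _ p q _ _ hpq => le_of_eq <| by
    simp only [smul_eq_mul]; linear_combination -c * hpq⟩

def affineMax (a c : ℕ → ℝ) : ℕ → ℝ → ℝ
  | 0 => fun t => a 0 * t + c 0
  | n + 1 => affineMax a c n ⊔ fun t => a (n + 1) * t + c (n + 1)

section affineMax

variable {a c : ℕ → ℝ}

theorem convexOn_affineMax (n : ℕ) : ConvexOn ℝ univ (affineMax a c n) := by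
  induction n with
  | zero => exact convexOn_univ_affine _ _
  | succ n ih => exact ih.sup (convexOn_univ_affine _ _)

theorem monotone_affineMax : Monotone (affineMax a c) :=
  monotone_nat_of_le_succ fun _ => le_sup_left

theorem le_affineMax {i n : ℕ} (h : i ≤ n) (t : ℝ) : a i * t + c i ≤ affineMax a c n t := by
  induction n, h using Nat.le_induction with
  | base => cases i with
    | zero => exact le_rfl
    | succ i => exact le_sup_right
  | succ n _ ih => exact ih.trans (monotone_affineMax n.le_succ t)

theorem affineMax_le {φ : ℝ → ℝ} (h : ∀ i t, a i * t + c i ≤ φ t) (n : ℕ) (t : ℝ) :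
    affineMax a c n t ≤ φ t := by
  induction n with
  | zero => exact h 0 t
  | succ n ih => exact sup_le ih (h _ t)

theorem tendsto_affineMax {φ : ℝ → ℝ} (hle : ∀ i t, a i * t + c i ≤ φ t)
    (hsup : ∀ t, ⨆ i, (a i * t + c i) = φ t) (t : ℝ) :
    Tendsto (fun n => affineMax a c n t) atTop (𝓝 (φ t)) := by
  have hbdd : BddAbove (range fun n => affineMax a c n t) :=
    ⟨φ t, by rintro _ ⟨n, rfl⟩; exact affineMax_le hle n t⟩
  convert tendsto_atTop_ciSup (fun m n h => monotone_affineMax h t) hbdd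
  refine le_antisymm ?_ (ciSup_le fun n => affineMax_le hle n t)
  rw [← hsup t]
  exact ciSup_mono hbdd fun n => le_affineMax le_rfl t

theorem integrable_affineMax_comp {α : Type*} [MeasurableSpace α] {μ : Measure α}
    [IsFiniteMeasure μ] {Z : α → ℝ} (hZ : Integrable Z μ) (n : ℕ) :
    Integrable (fun ω => affineMax a c n (Z ω)) μ := by
  induction n with
  | zero => exact (hZ.const_mul _).add (integrable_const _)
  | succ n ih => exact ih.sup ((hZ.const_mul _).add (integrable_const _))

end affineMax

section

variable {α : Type*} {m mα : MeasurableSpace α} {μ : Measure α}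

theorem integrable_of_monotone_of_integral_le {f : ℕ → α → ℝ} {F : α → ℝ} {C : ℝ}
    (hf : ∀ n, Integrable (f n) μ) (h_mono : ∀ᵐ x ∂μ, Monotone fun n => f n x)
    (h_tendsto : ∀ᵐ x ∂μ, Tendsto (fun n => f n x) atTop (𝓝 (F x)))
    (hC : ∀ n, ∫ x, f n x ∂μ ≤ C) : Integrable F μ := by
  have hF_ge : ∀ᵐ x ∂μ, 0 ≤ F x - f 0 x := by
    filter_upwards [h_mono, h_tendsto] with x hx_mono hx_tendsto
    exact sub_nonneg.2 (ge_of_tendsto' hx_tendsto fun n => hx_mono n.zero_le)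
  suffices Integrable (fun x => F x - f 0 x) μ from
    (this.add (hf 0)).congr (ae_of_all _ fun x => sub_add_cancel (F x) (f 0 x))
  refine ⟨(aestronglyMeasurable_of_tendsto_ae _ (fun n => (hf n).1) h_tendsto).sub (hf 0).1, ?_⟩
  rw [hasFiniteIntegral_iff_ofReal hF_ge]
  have h_lim := lintegral_tendsto_of_tendsto_of_monotone
    (μ := μ) (f := fun n x => ENNReal.ofReal (f n x - f 0 x))
    (fun n => ((hf n).sub (hf 0)).aemeasurable.ennreal_ofReal)
    (by filter_upwards [h_mono] with x hx n m hnm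
        exact ENNReal.ofReal_le_ofReal (sub_le_sub_right (hx hnm) _))
    (by filter_upwards [h_tendsto] with x hx
        exact (ENNReal.continuous_ofReal.tendsto _).comp (hx.sub_const _))
  refine (le_of_tendsto' h_lim fun n => ?_).trans_lt
    (ENNReal.ofReal_lt_top (r := C - ∫ x, f 0 x ∂μ))
  have h_nonneg : 0 ≤ᵐ[μ] fun x => f n x - f 0 x :=
    h_mono.mono fun x hx => sub_nonneg.2 (hx n.zero_le)
  have h_int : Integrable (fun x => f n x - f 0 x) μ := (hf n).sub (hf 0)
  rw [← ofReal_integral_eq_lintegral_ofReal h_int h_nonneg, integral_sub (hf n) (hf 0)]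
  exact ENNReal.ofReal_le_ofReal (sub_le_sub_right (hC n) _)

theorem convexOrdGE_of_ae_eq_condExp [IsFiniteMeasure μ] (hm : m ≤ mα) {A B : α → ℝ}
    (hA : Integrable A μ) (hB : B =ᵐ[μ] μ[A | m]) : ConvexOrdGE μ A B := by
  intro ψ hψ hψA
  have hjensen : ∀ᵐ ω ∂μ, ψ (B ω) ≤ μ[fun ω => ψ (A ω) | m] ω := by
    filter_upwards [hψ.map_condExp_le_of_finiteDimensional hm hA hψA, hB] with ω h hω
    rw [hω]
    exact h
  obtain ⟨a, a', hlow⟩ := hψ.exists_affine_le_real_univ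
  have hB_int : Integrable B μ := integrable_condExp.congr hB.symm
  have hψB : Integrable (fun ω => ψ (B ω)) μ :=
    integrable_of_le_of_le (hψ.locallyLipschitz.continuous.comp_aestronglyMeasurable hB_int.1)
      (ae_of_all _ fun ω => hlow (B ω)) hjensen
      ((hB_int.const_mul a).add (integrable_const a')) integrable_condExp
  exact ⟨hψB, (integral_mono_ae hψB integrable_condExp hjensen).trans_eq (integral_condExp hm)⟩

theorem condExp_cent_ae_eq [IsProbabilityMeasure μ] (hm : m ≤ mα) {Y X : α → ℝ}
    (hY : Integrable Y μ) (hX : Integrable X μ) {a b : ℝ}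
    (hmod : μ[Y | m] =ᵐ[μ] fun ω => a + X ω * b) :
    μ[cent μ Y | m] =ᵐ[μ] fun ω => cent μ X ω * b := by
  have hEY : ∫ ω, Y ω ∂μ = a + (∫ ω, X ω ∂μ) * b := by
    rw [← integral_condExp hm, integral_congr_ae hmod,
      integral_add (integrable_const a) (hX.mul_const b), integral_const, integral_mul_const]
    simp
  have hcent : cent μ Y = Y - fun _ => ∫ ω, Y ω ∂μ := rfl
  filter_upwards [condExp_sub hY (integrable_const (∫ ω, Y ω ∂μ)) m, hmod] with ω h1 h2
  rw [hcent, h1, condExp_const hm, Pi.sub_apply, h2, hEY]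
  simp only [cent]
  ring

namespace ConvexOrdGE

variable {Z A : α → ℝ} {β b : ℝ}

theorem integral_comp_mul_le (hord : ConvexOrdGE μ Z fun ω => A ω * b) (hβ : 0 ≤ β)
    (hβb : β < b) {ψ : ℝ → ℝ} (hψ : ConvexOn ℝ univ ψ) (hψZ : Integrable (fun ω => ψ (Z ω)) μ)
    (hψV : Integrable (fun ω => ψ (b / (b - β) * (Z ω - A ω * β))) μ) :
    ∫ ω, ψ (A ω * b) ∂μ ≤ ∫ ω, ψ (b / (b - β) * (Z ω - A ω * β)) ∂μ := by
  obtain ⟨hψA, hle⟩ := hord ψ hψ hψZ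
  beta_reduce at hψA hle
  have hb : 0 < b := hβ.trans_lt hβb
  have hγ : 0 < b - β := sub_pos.2 hβb
  have hweights : β / b + (b - β) / b = 1 := by field_simp; ring
  have hsplit : ∀ ω, ψ (Z ω) ≤
      β / b * ψ (A ω * b) + (b - β) / b * ψ (b / (b - β) * (Z ω - A ω * β)) := fun ω => by
    have hcomb : β / b * (A ω * b) + (b - β) / b * (b / (b - β) * (Z ω - A ω * β)) = Z ω := by
      field_simp
      ring
    simpa only [smul_eq_mul, hcomb] using hψ.2 (mem_univ (A ω * b))
      (mem_univ (b / (b - β) * (Z ω - A ω * β))) (div_nonneg hβ hb.le) (div_nonneg hγ.le hb.le)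
      hweights
  have hZ_le : ∫ ω, ψ (Z ω) ∂μ ≤ β / b * ∫ ω, ψ (A ω * b) ∂μ
      + (b - β) / b * ∫ ω, ψ (b / (b - β) * (Z ω - A ω * β)) ∂μ := by
    rw [← integral_const_mul, ← integral_const_mul,
      ← integral_add (hψA.const_mul _) (hψV.const_mul _)]
    exact integral_mono hψZ ((hψA.const_mul _).add (hψV.const_mul _)) hsplit
  have hA_split : β / b * ∫ ω, ψ (A ω * b) ∂μ + (b - β) / b * ∫ ω, ψ (A ω * b) ∂μ
      = ∫ ω, ψ (A ω * b) ∂μ := by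
    rw [← add_mul, hweights, one_mul]
  refine le_of_mul_le_mul_left ?_ (div_pos hγ hb)
  linarith

theorem integrable_comp_mul [IsFiniteMeasure μ] (hZ : Integrable Z μ) (hA : Integrable A μ)
    (hord : ConvexOrdGE μ Z fun ω => A ω * b) (hβ : 0 ≤ β) (hβb : β < b) {φ : ℝ → ℝ}
    (hφ : ConvexOn ℝ univ φ)
    (hφV : Integrable (fun ω => φ (b / (b - β) * (Z ω - A ω * β))) μ) :
    Integrable (fun ω => φ (A ω * b)) μ := by
  obtain ⟨a, c, hle, hsup⟩ := hφ.exists_nat_affine_le_iSup_eq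
  have hV : Integrable (fun ω => b / (b - β) * (Z ω - A ω * β)) μ :=
    (hZ.sub (hA.mul_const β)).const_mul _
  refine integrable_of_monotone_of_integral_le
    (C := ∫ ω, φ (b / (b - β) * (Z ω - A ω * β)) ∂μ)
    (fun n => integrable_affineMax_comp (hA.mul_const b) n)
    (ae_of_all _ fun ω m n h => monotone_affineMax h _)
    (ae_of_all _ fun ω => tendsto_affineMax hle hsup _) fun n => ?_
  calc ∫ ω, affineMax a c n (A ω * b) ∂μ
      ≤ ∫ ω, affineMax a c n (b / (b - β) * (Z ω - A ω * β)) ∂μ :=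
        hord.integral_comp_mul_le hβ hβb (convexOn_affineMax n) (integrable_affineMax_comp hZ n)
          (integrable_affineMax_comp hV n)
    _ ≤ ∫ ω, φ (b / (b - β) * (Z ω - A ω * β)) ∂μ :=
        integral_mono (integrable_affineMax_comp hV n) hφV fun ω => affineMax_le hle n _

end ConvexOrdGE

end

theorem stmt9_general (μ : Measure Ω) [IsProbabilityMeasure μ]
    (Y X : Ω → ℝ)
    (hXm : Measurable X)
    (hY2 : MemLp Y 2 μ) (hX2 : MemLp X 2 μ)
    (α₀ β₀ : ℝ)
    (hmod : μ[Y | MeasurableSpace.comap X inferInstance]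
      =ᵐ[μ] fun ω => α₀ + X ω * β₀)
    (hβ₀ : 0 < β₀)
    (hφ : ∃ φ : ℝ → ℝ, ConvexOn ℝ Set.univ φ ∧ ∀ l : ℝ, 0 < l →
      Integrable (fun ω => φ (l * (cent μ Y ω - cent μ X ω * β₀))) μ ∧
      ¬ Integrable (fun ω => φ (l * X ω)) μ) :
    IsGreatest {b : ℝ | ConvexOrdGE μ (cent μ Y) (fun ω => cent μ X ω * b)} β₀ := by
  obtain ⟨φ, hφ_conv, hφ_tails⟩ := hφ
  have hY := hY2.integrable one_le_two
  have hX := hX2.integrable one_le_two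
  have hY₀ : Integrable (cent μ Y) μ := hY.sub (integrable_const _)
  have hX₀ : Integrable (cent μ X) μ := hX.sub (integrable_const _)
  refine ⟨convexOrdGE_of_ae_eq_condExp hXm.comap_le hY₀
    (condExp_cent_ae_eq hXm.comap_le hY hX hmod).symm, fun b hb => ?_⟩
  by_contra! hβb
  have hφX₀ : Integrable (fun ω => φ (cent μ X ω * b)) μ :=
    ConvexOrdGE.integrable_comp_mul hY₀ hX₀ hb hβ₀.le hβb hφ_conv
      (hφ_tails _ (div_pos (hβ₀.trans hβb) (sub_pos.2 hβb))).1
  refine (hφ_tails (b / 2) (by linarith)).2 <|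
    (hφ_conv.integrable_comp_midpoint (hX₀.mul_const b) hφX₀ (b * ∫ ω, X ω ∂μ)).congr
      (ae_of_all _ fun ω => congrArg φ ?_)
  simp only [cent]
  ring

/-- Under Assumption 1 with `p = 1` and `β₀ > 0`, if there is a convex
`φ` with `E[φ(λU)] < E[φ(λX)] = ∞` for all `λ > 0` (where `U = Y₀ - X₀β₀`), then
`β₀ = max {b ∈ ℝ : Y₀ ⪰cx X₀ b}`. -/
theorem stmt9 (μ : Measure Ω) [IsProbabilityMeasure μ]
    (Y X : Ω → ℝ)
    (hYm : Measurable Y) (hXm : Measurable X)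
    (hY2 : MemLp Y 2 μ) (hX2 : MemLp X 2 μ)
    (hVarY : 0 < variance Y μ) (hVarX : 0 < variance X μ)
    (α₀ β₀ : ℝ)
    (hmod : μ[Y | MeasurableSpace.comap X inferInstance]
      =ᵐ[μ] fun ω => α₀ + X ω * β₀)
    (hβ₀ : 0 < β₀)
    (hφ : ∃ φ : ℝ → ℝ, ConvexOn ℝ Set.univ φ ∧ ∀ l : ℝ, 0 < l →
      Integrable (fun ω => φ (l * (cent μ Y ω - cent μ X ω * β₀))) μ ∧
      ¬ Integrable (fun ω => φ (l * X ω)) μ) :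
    IsGreatest {b : ℝ | ConvexOrdGE μ (cent μ Y) (fun ω => cent μ X ω * b)} β₀ :=
  stmt9_general μ Y X hXm hY2 hX2 α₀ β₀ hmod hβ₀ hφ
end
end

section
/- Let Z and U be real random variables on a common probability space with E[Z] = 0, and set W = Z + U. Assume: (a) Z has a density f with respect to Lebesgue measure satisfying liminf_{|x|→∞} |x|^{1+c} f(x) > 0 for some c > 1; and (b) limsup_{x→∞} x^d P(|U| > x) < ∞ for some d > c. Let α₀ ∈ (0,1) be such that F_Z⁻¹(α₀) > 0 and α₁ ∈ (0,1) be such that F_Z⁻¹(α₁) < 0. Then there exists K > 0 such that |F_W⁻¹(α)/F_Z⁻¹(α) − 1| ≤ K (1 − α)^{(1/c − 1/d)/(1 + 1/d)} for all α ∈ [α₀, 1), and |F_W⁻¹(α)/F_Z⁻¹(α) − 1| ≤ K α^{(1/c − 1/d)/(1 + 1/d)} for all α ∈ (0, α₁]. -/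
open MeasureTheory ProbabilityTheory Filter Set

noncomputable section

variable {Ω : Type*} [MeasurableSpace Ω]

/-! ### Generic quantile-function lemmas -/

section generic
variable {F : ℝ → ℝ} {α y : ℝ}

lemma qfset_bddBelow (hF : Monotone F) (hb : ∃ x, F x < α) : BddBelow {x | α ≤ F x} := by
  obtain ⟨x₀, hx₀⟩ := hb
  refine ⟨x₀, fun z hz => ?_⟩
  by_contra h
  exact absurd (le_trans hz.out (hF (le_of_not_ge h))) (not_le.2 hx₀)

lemma qf_le (hF : Monotone F) (hb : ∃ x, F x < α) (h : α ≤ F y) : qf F α ≤ y :=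
  csInf_le (qfset_bddBelow hF hb) h

lemma le_qf (hF : Monotone F) (hne : ∃ x, α ≤ F x) (h : F y < α) : y ≤ qf F α := by
  refine le_csInf hne fun z hz => ?_
  by_contra hzy
  exact absurd (le_trans hz.out (hF (le_of_not_ge hzy))) (not_le.2 h)

lemma lt_qf_cdf (hF : Monotone F) (hne : ∃ x, α ≤ F x) {h : ℝ} (hh : 0 < h) :
    α ≤ F (qf F α + h) := by
  obtain ⟨z, hz, hlt⟩ := exists_lt_of_csInf_lt hne
    (by linarith [lt_add_of_pos_right (qf F α) hh] : qf F α < qf F α + h)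
  exact le_trans hz.out (hF hlt.le)

lemma cdf_lt_of_lt_qf (hF : Monotone F) (hb : ∃ x, F x < α) (h : y < qf F α) : F y < α := by
  by_contra hc
  exact absurd (qf_le hF hb (le_of_not_gt hc)) (not_le.2 h)

lemma qf_mono (hF : Monotone F) {β : ℝ} (hb : ∃ x, F x < α) (hne : ∃ x, β ≤ F x) (hαβ : α ≤ β) :
    qf F α ≤ qf F β :=
  csInf_le_csInf (qfset_bddBelow hF hb) hne (fun _ hz => le_trans hαβ hz.out)

end generic

/-! ### Generic cdf lemmas -/

section cdf
variable (μ : Measure Ω) [IsProbabilityMeasure μ] (A : Ω → ℝ)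

lemma cdfRV_mono : Monotone (cdfRV μ A) := fun s t hst => by
  apply ENNReal.toReal_mono (measure_ne_top μ _)
  exact measure_mono (fun ω hω => le_trans hω hst)

omit [IsProbabilityMeasure μ] in
lemma cdfRV_nonneg (t : ℝ) : 0 ≤ cdfRV μ A t := ENNReal.toReal_nonneg

lemma cdfRV_le_one (t : ℝ) : cdfRV μ A t ≤ 1 := by
  rw [cdfRV, ← ENNReal.toReal_one]
  exact ENNReal.toReal_mono ENNReal.one_ne_top prob_le_one

lemma exists_le_cdfRV {α : ℝ} (hα : α < 1) : ∃ x, α ≤ cdfRV μ A x := by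
  rcases le_or_gt α 0 with h0|h0
  · exact ⟨0, h0.trans ENNReal.toReal_nonneg⟩
  have hmono : Monotone (fun n : ℕ => {ω | A ω ≤ (n:ℝ)}) := by
    intro m n hmn ω hω
    simp only [mem_setOf_eq] at *
    exact le_trans hω (Nat.cast_le.2 hmn)
  have hU : (⋃ n : ℕ, {ω | A ω ≤ (n:ℝ)}) = univ := by
    ext ω; simp only [mem_iUnion, mem_univ, iff_true, mem_setOf_eq]
    obtain ⟨n, hn⟩ := exists_nat_ge (A ω); exact ⟨n, hn⟩
  have h1 : (1:ENNReal) = ⨆ n : ℕ, μ {ω | A ω ≤ (n:ℝ)} := by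
    rw [← hmono.measure_iUnion, hU, measure_univ]
  have h2 : ENNReal.ofReal α < ⨆ n : ℕ, μ {ω | A ω ≤ (n:ℝ)} := by
    rw [← h1]
    exact ENNReal.ofReal_lt_one.2 hα
  obtain ⟨n, hn⟩ := lt_iSup_iff.1 h2
  refine ⟨(n:ℝ), ?_⟩
  rw [cdfRV, ← ENNReal.toReal_ofReal h0.le]
  exact ENNReal.toReal_mono (measure_ne_top μ _) hn.le

lemma exists_cdfRV_lt (hA : Measurable A) {α : ℝ} (hα : 0 < α) : ∃ x, cdfRV μ A x < α := by
  have hanti : Antitone (fun n : ℕ => {ω | A ω ≤ -(n:ℝ)}) := by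
    intro m n hmn ω hω
    simp only [mem_setOf_eq] at *
    exact le_trans hω (neg_le_neg (Nat.cast_le.2 hmn))
  have hI : (⋂ n : ℕ, {ω | A ω ≤ -(n:ℝ)}) = ∅ := by
    ext ω; simp only [mem_iInter, mem_setOf_eq, mem_empty_iff_false, iff_false, not_forall]
    obtain ⟨n, hn⟩ := exists_nat_gt (-(A ω)); exact ⟨n, by push_neg; linarith⟩
  have h0 : (⨅ n : ℕ, μ {ω | A ω ≤ -(n:ℝ)}) = 0 := by
    rw [← hanti.measure_iInter (fun n => (hA measurableSet_Iic).nullMeasurableSet)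
      ⟨0, measure_ne_top μ _⟩, hI, measure_empty]
  have h2 : (⨅ n : ℕ, μ {ω | A ω ≤ -(n:ℝ)}) < ENNReal.ofReal α := by
    rw [h0]; exact ENNReal.ofReal_pos.2 hα
  obtain ⟨n, hn⟩ := iInf_lt_iff.1 h2
  refine ⟨-(n:ℝ), ?_⟩
  rw [cdfRV, ← ENNReal.toReal_ofReal hα.le]
  exact ENNReal.toReal_strict_mono ENNReal.ofReal_ne_top hn

end cdf

/-! ### The density gap estimate -/

section dens
variable (μ : Measure Ω) [IsProbabilityMeasure μ] (Z : Ω → ℝ) (f : ℝ → ℝ)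
variable (hZm : Measurable Z)
  (hdens : μ.map Z = MeasureTheory.volume.withDensity fun x => ENNReal.ofReal (f x))
include hZm hdens

lemma cdfZ_gap {u v m : ℝ} (huv : u ≤ v) (hm : 0 ≤ m) (hfm : ∀ y ∈ Ioc u v, m ≤ f y) :
    cdfRV μ Z u + m * (v - u) ≤ cdfRV μ Z v := by
  have hmap : ∀ t : ℝ, μ {ω | Z ω ≤ t} = (μ.map Z) (Iic t) := fun t => by
    rw [Measure.map_apply hZm measurableSet_Iic]; rfl
  have hsplit : (μ.map Z) (Iic v) = (μ.map Z) (Iic u) + (μ.map Z) (Ioc u v) := by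
    rw [← measure_union (Iic_disjoint_Ioc le_rfl) measurableSet_Ioc, Iic_union_Ioc_eq_Iic huv]
  have hIoc : ENNReal.ofReal (m * (v - u)) ≤ (μ.map Z) (Ioc u v) := by
    rw [hdens, withDensity_apply _ measurableSet_Ioc]
    calc ENNReal.ofReal (m * (v - u)) = ENNReal.ofReal m * volume (Ioc u v) := by
          rw [Real.volume_Ioc, ENNReal.ofReal_mul hm]
      _ = ∫⁻ _ in Ioc u v, ENNReal.ofReal m ∂volume := (setLIntegral_const _ _).symm
      _ ≤ ∫⁻ y in Ioc u v, ENNReal.ofReal (f y) ∂volume :=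
          setLIntegral_mono' measurableSet_Ioc fun y hy => ENNReal.ofReal_le_ofReal (hfm y hy)
  have hfin : (μ.map Z) (Iic u) ≠ ⊤ := by
    rw [← hmap]; exact measure_ne_top μ _
  have hfin2 : (μ.map Z) (Ioc u v) ≠ ⊤ := by
    have h' : (μ.map Z) (Ioc u v) ≤ (μ.map Z) (Iic v) := measure_mono Ioc_subset_Iic_self
    rw [← hmap] at h'
    exact ne_top_of_le_ne_top (measure_ne_top μ _) h'
  have heq := congrArg ENNReal.toReal hsplit
  rw [ENNReal.toReal_add hfin hfin2] at heq
  simp only [cdfRV, hmap]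
  rw [heq]
  gcongr
  rw [← ENNReal.toReal_ofReal (mul_nonneg hm (by linarith))]
  exact ENNReal.toReal_mono hfin2 hIoc

end dens

/-! ### Sandwich between the cdfs of `W = Z + U` and `Z` -/

section sandwich
variable (μ : Measure Ω) [IsProbabilityMeasure μ] (Z U : Ω → ℝ)

lemma cdfW_ge (y t : ℝ) :
    cdfRV μ Z (y - t) - (μ {ω | t < |U ω|}).toReal ≤ cdfRV μ (fun ω => Z ω + U ω) y := by
  have hsub : {ω | Z ω ≤ y - t} ⊆ {ω | Z ω + U ω ≤ y} ∪ {ω | t < |U ω|} := by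
    intro ω hω
    rcases le_or_gt (|U ω|) t with h|h
    · left
      have h2 := abs_le.1 h
      simp only [mem_setOf_eq] at *
      linarith [h2.2]
    · exact Or.inr h
  have h1 : μ {ω | Z ω ≤ y - t} ≤ μ {ω | Z ω + U ω ≤ y} + μ {ω | t < |U ω|} :=
    le_trans (measure_mono hsub) (measure_union_le _ _)
  have h2 := ENNReal.toReal_mono (by finiteness) h1
  rw [ENNReal.toReal_add (measure_ne_top μ _) (measure_ne_top μ _)] at h2
  simp only [cdfRV]
  linarith

lemma cdfW_le (y t : ℝ) :
    cdfRV μ (fun ω => Z ω + U ω) y ≤ cdfRV μ Z (y + t) + (μ {ω | t < |U ω|}).toReal := by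
  have hsub : {ω | Z ω + U ω ≤ y} ⊆ {ω | Z ω ≤ y + t} ∪ {ω | t < |U ω|} := by
    intro ω hω
    rcases le_or_gt (|U ω|) t with h|h
    · left
      have h2 := abs_le.1 h
      simp only [mem_setOf_eq] at *
      linarith [h2.1]
    · exact Or.inr h
  have h1 : μ {ω | Z ω + U ω ≤ y} ≤ μ {ω | Z ω ≤ y + t} + μ {ω | t < |U ω|} :=
    le_trans (measure_mono hsub) (measure_union_le _ _)
  have h2 := ENNReal.toReal_mono (by finiteness) h1
  rw [ENNReal.toReal_add (measure_ne_top μ _) (measure_ne_top μ _)] at h2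
  simp only [cdfRV]
  linarith

end sandwich

/-! ### rpow identities -/

section rpowid

lemma rpow_id1 (p cc κ : ℝ) (hp : 0 < p) :
    p ^ (1-κ) / (2*p) ^ (1+cc) = 2 ^ (-(1+cc)) * p ^ (-(cc+κ)) := by
  have e1 : p ^ (1-κ) = p ^ (1+cc) * p ^ (-(cc+κ)) := by
    rw [← Real.rpow_add hp]; congr 1; ring
  rw [Real.mul_rpow (by norm_num) hp.le, e1, Real.rpow_neg (by norm_num : (0:ℝ) ≤ 2)]
  have h2 : (2:ℝ) ^ (1+cc) ≠ 0 := (Real.rpow_pos_of_pos (by norm_num) _).ne'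
  have h3 : p ^ (1+cc) ≠ 0 := (Real.rpow_pos_of_pos hp _).ne'
  field_simp

lemma rpow_id2 (p c₀ cc : ℝ) (hp : 0 < p) :
    c₀ * (2*p) / (4*p) ^ (1+cc) = (2 * c₀ * 4 ^ (-(1+cc))) * p ^ (-cc) := by
  have e1 : p = p ^ (1+cc) * p ^ (-cc) := by
    rw [← Real.rpow_add hp]; norm_num
  rw [Real.mul_rpow (by norm_num) hp.le, Real.rpow_neg (by norm_num : (0:ℝ) ≤ 4)]
  have h2 : (4:ℝ) ^ (1+cc) ≠ 0 := (Real.rpow_pos_of_pos (by norm_num) _).ne'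
  have h3 : p ^ (1+cc) ≠ 0 := (Real.rpow_pos_of_pos hp _).ne'
  calc c₀ * (2*p) / (4 ^ (1+cc) * p ^ (1+cc))
      = c₀ * (2*(p ^ (1+cc) * p ^ (-cc))) / (4 ^ (1+cc) * p ^ (1+cc)) := by rw [← e1]
    _ = 2 * c₀ * (4 ^ (1+cc))⁻¹ * p ^ (-cc) := by field_simp

lemma rpow_id3 (p κ : ℝ) (hp : 0 < p) : p ^ (1-κ) / p = p ^ (-κ) := by
  have e1 : p ^ (1-κ) = p * p ^ (-κ) := by
    nth_rewrite 1 [show (1:ℝ)-κ = 1 + -κ by ring]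
    rw [Real.rpow_add hp, Real.rpow_one]
  rw [e1]
  field_simp

lemma rpow_id4 (p cc κ : ℝ) (hp : 0 < p) (hc : cc ≠ 0) : p ^ (-κ) = (p ^ (-cc)) ^ (κ/cc) := by
  rw [← Real.rpow_mul hp.le]
  congr 1
  field_simp

end rpowid

set_option maxHeartbeats 4000000 in
/-- If `Z` is centered with a fat-tailed density
(`liminf_{|x|→∞} |x|^{1+c} f(x) > 0`, `c > 1`) and `U` has thinner tails
(`limsup_{x→∞} x^d P(|U| > x) < ∞`, `d > c`), then the quantiles of `W = Z + U`
are uniformly close to those of `Z` in ratio, with the stated polynomial rates in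
both tails. -/
theorem stmt16 (μ : Measure Ω) [IsProbabilityMeasure μ]
    (Z U : Ω → ℝ) (hZm : Measurable Z) (hUm : Measurable U)
    (hZint : Integrable Z μ) (hZmean : ∫ ω, Z ω ∂μ = 0)
    (c d : ℝ) (hc : 1 < c) (hcd : c < d)
    (f : ℝ → ℝ) (hf0 : ∀ x, 0 ≤ f x)
    (hdens : μ.map Z = MeasureTheory.volume.withDensity fun x => ENNReal.ofReal (f x))
    (hliminf : ∃ c₀ > (0:ℝ), ∀ᶠ x : ℝ in atBot ⊔ atTop, c₀ ≤ |x| ^ (1 + c) * f x)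
    (hUtail : ∃ C : ℝ, ∀ᶠ x : ℝ in atTop, x ^ d * (μ {ω | x < |U ω|}).toReal ≤ C)
    (α₀ α₁ : ℝ) (hα₀ : α₀ ∈ Set.Ioo (0:ℝ) 1) (hα₁ : α₁ ∈ Set.Ioo (0:ℝ) 1)
    (hq0 : 0 < qf (cdfRV μ Z) α₀) (hq1 : qf (cdfRV μ Z) α₁ < 0) :
    ∃ K > (0:ℝ),
      (∀ α ∈ Set.Ico α₀ (1:ℝ),
        |qf (cdfRV μ (fun ω => Z ω + U ω)) α / qf (cdfRV μ Z) α - 1| ≤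
          K * (1 - α) ^ ((1/c - 1/d) / (1 + 1/d))) ∧
      (∀ α ∈ Set.Ioc (0:ℝ) α₁,
        |qf (cdfRV μ (fun ω => Z ω + U ω)) α / qf (cdfRV μ Z) α - 1| ≤
          K * α ^ ((1/c - 1/d) / (1 + 1/d))) := by
  classical
  obtain ⟨c₀, hc₀, hev⟩ := hliminf
  rw [eventually_sup] at hev
  obtain ⟨hevb, hevt⟩ := hev
  obtain ⟨b₁, hb₁⟩ := eventually_atBot.1 hevb
  obtain ⟨b₂, hb₂⟩ := eventually_atTop.1 hevt
  set x₀ : ℝ := max (max (-b₁) b₂) 1 with hx₀def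
  have hx₀1 : (1:ℝ) ≤ x₀ := le_max_right _ _
  have hx₀pos : (0:ℝ) < x₀ := lt_of_lt_of_le one_pos hx₀1
  have hfd : ∀ y B : ℝ, x₀ ≤ |y| → |y| ≤ B → c₀ / B ^ (1+c) ≤ f y := by
    intro y B h1 h2
    have hyb : c₀ ≤ |y| ^ (1+c) * f y := by
      rcases le_or_gt 0 y with hy|hy
      · refine hb₂ y ?_
        rw [abs_of_nonneg hy] at h1
        have hb2x : b₂ ≤ x₀ := le_trans (le_max_right _ _) (le_max_left _ _)
        linarith only [h1, hb2x]
      · refine hb₁ y ?_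
        rw [abs_of_neg hy] at h1
        have hb1x : -b₁ ≤ x₀ := le_trans (le_max_left _ _) (le_max_left _ _)
        linarith only [h1, hb1x]
    have hBpos : 0 < B := lt_of_lt_of_le hx₀pos (le_trans h1 h2)
    have hRB : |y| ^ (1+c) ≤ B ^ (1+c) := Real.rpow_le_rpow (abs_nonneg y) h2 (by linarith only [hc])
    rw [div_le_iff₀ (Real.rpow_pos_of_pos hBpos _)]
    calc c₀ ≤ |y| ^ (1+c) * f y := hyb
      _ ≤ B ^ (1+c) * f y := mul_le_mul_of_nonneg_right hRB (hf0 y)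
      _ = f y * B ^ (1+c) := mul_comm _ _
  obtain ⟨C₁, hC₁⟩ := hUtail
  obtain ⟨T₁, hT₁⟩ := eventually_atTop.1 hC₁
  set C : ℝ := max C₁ 0 with hCdef
  have hC0 : (0:ℝ) ≤ C := le_max_right _ _
  set T₀ : ℝ := max T₁ 1 with hT₀def
  have hT₀1 : (1:ℝ) ≤ T₀ := le_max_right _ _
  have hδt : ∀ t : ℝ, T₀ ≤ t → (μ {ω | t < |U ω|}).toReal ≤ C * t ^ (-d) := by
    intro t ht
    have ht0 : 0 < t := lt_of_lt_of_le one_pos (le_trans hT₀1 ht)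
    have h1 : t ^ d * (μ {ω | t < |U ω|}).toReal ≤ C :=
      le_trans (hT₁ t (le_trans (le_max_left _ _) ht)) (le_max_left _ _)
    have htd : 0 < t ^ d := Real.rpow_pos_of_pos ht0 _
    rw [Real.rpow_neg ht0.le, ← div_eq_mul_inv, le_div_iff₀ htd]
    linarith only [h1, mul_comm (t ^ d) ((μ {ω | t < |U ω|}).toReal)]
  set κ : ℝ := (d - c)/(d+1) with hκdef
  have hd1 : (0:ℝ) < d + 1 := by linarith only [hc, hcd]
  have hκpos : 0 < κ := div_pos (by linarith only [hcd]) hd1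
  have hκ1 : κ < 1 := (div_lt_one hd1).2 (by linarith only [hc])
  have h1κ : 0 < 1 - κ := by linarith only [hκ1]
  have hcne : c ≠ 0 := ne_of_gt (by linarith only [hc])
  have hdκ : (1-κ)*d = c + κ := by
    rw [hκdef]; field_simp; ring
  set γ : ℝ := κ / c with hγdef
  have hγpos : 0 < γ := div_pos hκpos (by linarith only [hc])
  have hγeq : (1/c - 1/d)/(1+1/d) = γ := by
    rw [hγdef, hκdef]
    have h2 : d ≠ 0 := ne_of_gt (by linarith only [hc, hcd])
    have h3 : d+1 ≠ 0 := ne_of_gt hd1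
    field_simp
  set M : ℝ := 2 + 2 ^ (1+c) * (C+1) / c₀ with hMdef
  have hM2 : 2 ≤ M := le_add_of_nonneg_right (by positivity)
  have hMpos : (0:ℝ) < M := by linarith only [hM2]
  have hMc₀ : c₀ * (M - 2) = 2 ^ (1+c) * (C+1) := by
    rw [hMdef]; field_simp; ring
  set R₀ : ℝ := max (max (2*x₀) (T₀ ^ (1/(1-κ)))) ((2*M) ^ (1/κ)) with hR₀def
  have hR₀x : 2*x₀ ≤ R₀ := le_trans (le_max_left _ _) (le_max_left _ _)
  have hR₀1 : (1:ℝ) ≤ R₀ := by linarith only [hR₀x, hx₀1]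
  have hR₀pos : (0:ℝ) < R₀ := by linarith only [hR₀1]
  have hcore : ∀ p : ℝ, R₀ ≤ p → T₀ ≤ p ^ (1-κ) ∧ 2*M*(p^(1-κ)) ≤ p := by
    intro p hp
    have hp0 : 0 < p := lt_of_lt_of_le hR₀pos hp
    have hT₀0 : (0:ℝ) ≤ T₀ := by linarith only [hT₀1]
    constructor
    · have h1 : T₀ ^ (1/(1-κ)) ≤ p :=
        le_trans (le_trans (le_max_right _ _) (le_max_left _ _)) hp
      have h2 : (T₀ ^ (1/(1-κ))) ^ (1-κ) ≤ p ^ (1-κ) :=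
        Real.rpow_le_rpow (Real.rpow_nonneg hT₀0 _) h1 h1κ.le
      rwa [← Real.rpow_mul hT₀0, one_div, inv_mul_cancel₀ h1κ.ne', Real.rpow_one] at h2
    · have h1 : (2*M) ^ (1/κ) ≤ p := le_trans (le_max_right _ _) hp
      have h2 : ((2*M) ^ (1/κ)) ^ κ ≤ p ^ κ :=
        Real.rpow_le_rpow (Real.rpow_nonneg (by linarith only [hMpos]) _) h1 hκpos.le
      rw [← Real.rpow_mul (by linarith only [hMpos] : (0:ℝ) ≤ 2*M), one_div,
        inv_mul_cancel₀ hκpos.ne', Real.rpow_one] at h2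
      calc 2*M*(p^(1-κ)) ≤ p^κ * p^(1-κ) :=
            mul_le_mul_of_nonneg_right h2 (Real.rpow_nonneg hp0.le _)
        _ = p := by rw [← Real.rpow_add hp0]; norm_num
  have hFmono := cdfRV_mono μ Z
  have hGmono := cdfRV_mono μ (fun ω => Z ω + U ω)
  have hWm : Measurable (fun ω => Z ω + U ω) := hZm.add hUm
  have hFb : ∀ {aa : ℝ}, 0 < aa → ∃ x, cdfRV μ Z x < aa := fun ha => exists_cdfRV_lt μ Z hZm ha
  have hFne : ∀ {aa : ℝ}, aa < 1 → ∃ x, aa ≤ cdfRV μ Z x := fun ha => exists_le_cdfRV μ Z ha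
  have hGb : ∀ {aa : ℝ}, 0 < aa → ∃ x, cdfRV μ (fun ω => Z ω + U ω) x < aa :=
    fun ha => exists_cdfRV_lt μ _ hWm ha
  have hGne : ∀ {aa : ℝ}, aa < 1 → ∃ x, aa ≤ cdfRV μ (fun ω => Z ω + U ω) x :=
    fun ha => exists_le_cdfRV μ _ ha
  have htrigP : ∀ aa r : ℝ, aa < 1 → qf (cdfRV μ Z) aa ≤ r → x₀ ≤ r →
      c₀ * (2*r) / (4*r)^(1+c) ≤ 1 - aa := by
    intro aa r ha hqr hxr
    have hr0 : 0 < r := lt_of_lt_of_le hx₀pos hxr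
    have hF2r : aa ≤ cdfRV μ Z (2*r) := by
      have h1 := lt_qf_cdf hFmono (hFne ha)
        (show 0 < 2*r - qf (cdfRV μ Z) aa by linarith only [hqr, hr0])
      have h2 : qf (cdfRV μ Z) aa + (2*r - qf (cdfRV μ Z) aa) = 2*r := by ring
      rwa [h2] at h1
    have hmem : ∀ y ∈ Ioc (2*r) (4*r), c₀/(4*r)^(1+c) ≤ f y := by
      intro y hy
      have hy0 : 0 < y := by linarith only [hy.1, hr0]
      have hyabs : |y| = y := abs_of_pos hy0
      refine hfd y (4*r) ?_ ?_
      · rw [hyabs]; linarith only [hy.1, hxr, hr0]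
      · rw [hyabs]; exact hy.2
    have hgap := cdfZ_gap μ Z f hZm hdens (show 2*r ≤ 4*r by linarith only [hr0])
      (by positivity : (0:ℝ) ≤ c₀/(4*r)^(1+c)) hmem
    have hle1 := cdfRV_le_one μ Z (4*r)
    have h3 : c₀/(4*r)^(1+c) * (4*r - 2*r) ≤ 1 - aa := by linarith only [hgap, hF2r, hle1]
    calc c₀ * (2*r)/(4*r)^(1+c) = c₀/(4*r)^(1+c) * (4*r-2*r) := by ring
      _ ≤ 1 - aa := h3
  have htrigN : ∀ aa p : ℝ, 0 < aa → -(2*p) < qf (cdfRV μ Z) aa → x₀ ≤ 2*p →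
      c₀ * (2*p) / (4*p)^(1+c) ≤ aa := by
    intro aa p ha hq hx
    have hp0 : 0 < p := by linarith only [hx, hx₀pos]
    have hFlt : cdfRV μ Z (-(2*p)) < aa := cdf_lt_of_lt_qf hFmono (hFb ha) hq
    have hmem : ∀ y ∈ Ioc (-(4*p)) (-(2*p)), c₀/(4*p)^(1+c) ≤ f y := by
      intro y hy
      have hy0 : y < 0 := by linarith only [hy.2, hp0]
      have hyabs : |y| = -y := abs_of_neg hy0
      refine hfd y (4*p) ?_ ?_
      · rw [hyabs]; linarith only [hy.2, hx]
      · rw [hyabs]; linarith only [hy.1]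
    have hgap := cdfZ_gap μ Z f hZm hdens (show -(4*p) ≤ -(2*p) by linarith only [hp0])
      (by positivity : (0:ℝ) ≤ c₀/(4*p)^(1+c)) hmem
    have hge0 := cdfRV_nonneg μ Z (-(4*p))
    have h3 : c₀/(4*p)^(1+c) * ((-(2*p)) - (-(4*p))) ≤ aa := by linarith only [hgap, hge0, hFlt]
    calc c₀ * (2*p)/(4*p)^(1+c) = c₀/(4*p)^(1+c) * ((-(2*p)) - (-(4*p))) := by ring
      _ ≤ aa := h3
  set G := cdfRV μ (fun ω => Z ω + U ω) with hGdef
  set qZ₀ : ℝ := qf (cdfRV μ Z) α₀ with hqZ₀def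
  set p₁ : ℝ := -(qf (cdfRV μ Z) α₁) with hp₁def
  have hp₁pos : 0 < p₁ := by rw [hp₁def]; linarith only [hq1]
  set ε₂ : ℝ := c₀ * (2*R₀) / (4*R₀)^(1+c) with hε₂def
  have hε₂pos : 0 < ε₂ := by rw [hε₂def]; positivity
  set β : ℝ := max α₀ (1 - ε₂) with hβdef
  have hβlt1 : β < 1 := max_lt hα₀.2 (by linarith only [hε₂pos])
  have hβpos : 0 < β := lt_of_lt_of_le hα₀.1 (le_max_left _ _)
  set β' : ℝ := min α₁ ε₂ with hβ'def
  have hβ'pos : 0 < β' := lt_min hα₁.1 hε₂pos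
  have hβ'lt1 : β' < 1 := lt_of_le_of_lt (min_le_left _ _) hα₁.2
  set Qp : ℝ := max |qf G α₀| |qf G β| with hQpdef
  have hQp0 : 0 ≤ Qp := le_trans (abs_nonneg _) (le_max_left _ _)
  set Qn : ℝ := max |qf G β'| |qf G α₁| with hQndef
  have hQn0 : 0 ≤ Qn := le_trans (abs_nonneg _) (le_max_left _ _)
  set B₁ : ℝ := Qp/qZ₀ + 1 with hB₁def
  have hB₁0 : 0 ≤ B₁ := by
    have h' : 0 ≤ Qp/qZ₀ := div_nonneg hQp0 (le_of_lt hq0)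
    rw [hB₁def]; linarith only [h']
  set B₂ : ℝ := Qn/p₁ + 1 with hB₂def
  have hB₂0 : 0 ≤ B₂ := by
    have h' : 0 ≤ Qn/p₁ := div_nonneg hQn0 hp₁pos.le
    rw [hB₂def]; linarith only [h']
  set a : ℝ := 2 * c₀ * 4 ^ (-(1+c)) with hadef
  have hapos : 0 < a := by rw [hadef]; positivity
  set Kc : ℝ := M / a ^ γ with hKcdef
  have hKc0 : 0 ≤ Kc := div_nonneg hMpos.le (Real.rpow_nonneg hapos.le _)
  have hε₂γpos : 0 < ε₂ ^ γ := Real.rpow_pos_of_pos hε₂pos _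
  set K : ℝ := B₁ / ε₂ ^ γ + B₂ / ε₂ ^ γ + Kc + 1 with hKdef
  have hd1' : 0 ≤ B₁ / ε₂ ^ γ := div_nonneg hB₁0 hε₂γpos.le
  have hd2' : 0 ≤ B₂ / ε₂ ^ γ := div_nonneg hB₂0 hε₂γpos.le
  have hKpos : 0 < K := by rw [hKdef]; linarith only [hd1', hd2', hKc0]
  have hKB₁ : B₁ / ε₂ ^ γ ≤ K := by rw [hKdef]; linarith only [hd1', hd2', hKc0]
  have hKB₂ : B₂ / ε₂ ^ γ ≤ K := by rw [hKdef]; linarith only [hd1', hd2', hKc0]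
  have hKKc : Kc ≤ K := by rw [hKdef]; linarith only [hd1', hd2', hKc0]
  refine ⟨K, hKpos, ?_, ?_⟩
  · -- positive (right-tail) side
    intro α hα
    obtain ⟨hαl, hαu⟩ := hα
    have hαpos : 0 < α := lt_of_lt_of_le hα₀.1 hαl
    have hεpos : 0 < 1 - α := by linarith only [hαu]
    rw [hγeq]
    set q : ℝ := qf (cdfRV μ Z) α with hqdef
    have hq₀q : qZ₀ ≤ q := qf_mono hFmono (hFb hα₀.1) (hFne hαu) hαl
    have hqpos : 0 < q := lt_of_lt_of_le hq0 hq₀q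
    set qW : ℝ := qf G α with hqWdef
    by_cases hqR : R₀ ≤ q
    · -- core regime
      obtain ⟨hT₀h, h2M⟩ := hcore q hqR
      set hh : ℝ := q ^ (1-κ) with hhdef
      have hh0 : 0 < hh := Real.rpow_pos_of_pos hqpos _
      set δ : ℝ := (μ {ω | hh < |U ω|}).toReal with hδdef
      have hδ0 : 0 ≤ δ := ENNReal.toReal_nonneg
      set X : ℝ := q ^ (-(c+κ)) with hXdef
      have hX0 : 0 < X := Real.rpow_pos_of_pos hqpos _
      have hδX : δ ≤ C * X := by
        have h1 := hδt hh hT₀h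
        have h2 : hh ^ (-d) = X := by
          rw [hhdef, hXdef, ← Real.rpow_mul hqpos.le]
          congr 1
          have : (1-κ)*(-d) = -((1-κ)*d) := by ring
          rw [this, hdκ]
        rwa [h2] at h1
      have hm : (0:ℝ) ≤ c₀/(2*q)^(1+c) := by positivity
      have hMh : 2*M*hh ≤ q := by
        linarith only [h2M]
      have hmem1 : ∀ y ∈ Ioc (q+hh) (q+(M-1)*hh), c₀/(2*q)^(1+c) ≤ f y := by
        intro y hy
        have hy1 : q + hh < y := hy.1
        have hy2 : y ≤ q + (M-1)*hh := hy.2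
        have hyabs : |y| = y := abs_of_pos (by linarith only [hy1, hh0, hqpos])
        refine hfd y (2*q) ?_ ?_
        · rw [hyabs]; linarith only [hy1, hx₀pos, hR₀x, hqR, hh0]
        · rw [hyabs]; linarith only [hy2, hMh, hh0, hqpos]
      have hgap1 := cdfZ_gap μ Z f hZm hdens (u := q+hh) (v := q+(M-1)*hh)
        (by linarith only [mul_le_mul_of_nonneg_right hM2 hh0.le, hh0]) hm hmem1
      have h2c : (2:ℝ)^(1+c) * 2^(-(1+c)) = 1 := by
        rw [Real.rpow_neg (by norm_num : (0:ℝ) ≤ 2)]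
        exact mul_inv_cancel₀ (Real.rpow_pos_of_pos two_pos _).ne'
      have hinc : c₀/(2*q)^(1+c) * ((q+(M-1)*hh) - (q+hh)) = (C+1)*X := by
        have e1 := rpow_id1 q c κ hqpos
        calc c₀/(2*q)^(1+c) * ((q+(M-1)*hh) - (q+hh))
            = c₀*(M-2) * (hh/(2*q)^(1+c)) := by ring
          _ = (2^(1+c)*(C+1)) * (2^(-(1+c)) * X) := by
              rw [hhdef, hXdef, e1, hMc₀]
          _ = (2^(1+c)*2^(-(1+c)))*((C+1)*X) := by ring
          _ = (C+1)*X := by rw [h2c, one_mul]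
      have hFh : α ≤ cdfRV μ Z (q+hh) := lt_qf_cdf hFmono (hFne hαu) hh0
      have hup : qW ≤ q + M*hh := by
        refine qf_le hGmono (hGb hαpos) ?_
        have h1 := cdfW_ge μ Z U (q+M*hh) hh
        have h2 : q + M*hh - hh = q + (M-1)*hh := by ring
        rw [h2] at h1
        rw [hGdef]
        linarith only [h1, hgap1, hinc.symm.le, hδX, hX0, hFh]
      have hmem2 : ∀ y ∈ Ioc (q-(M-1)*hh) (q-hh), c₀/(2*q)^(1+c) ≤ f y := by
        intro y hy
        have hy1 : q - (M-1)*hh < y := hy.1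
        have hy2 : y ≤ q - hh := hy.2
        have hy0 : 0 < y := by linarith only [hy1, hMh, hh0, hqpos]
        have hyabs : |y| = y := abs_of_pos hy0
        refine hfd y (2*q) ?_ ?_
        · rw [hyabs]; linarith only [hy1, hMh, hh0, hR₀x, hqR, hx₀pos]
        · rw [hyabs]; linarith only [hy2, hh0, hqpos]
      have hgap2 := cdfZ_gap μ Z f hZm hdens (u := q-(M-1)*hh) (v := q-hh)
        (by linarith only [mul_le_mul_of_nonneg_right hM2 hh0.le, hh0]) hm hmem2
      have hinc2 : c₀/(2*q)^(1+c) * ((q-hh) - (q-(M-1)*hh)) = (C+1)*X := by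
        have e1 := rpow_id1 q c κ hqpos
        calc c₀/(2*q)^(1+c) * ((q-hh) - (q-(M-1)*hh))
            = c₀*(M-2) * (hh/(2*q)^(1+c)) := by ring
          _ = (2^(1+c)*(C+1)) * (2^(-(1+c)) * X) := by
              rw [hhdef, hXdef, e1, hMc₀]
          _ = (2^(1+c)*2^(-(1+c)))*((C+1)*X) := by ring
          _ = (C+1)*X := by rw [h2c, one_mul]
      have hFq_h : cdfRV μ Z (q-hh) < α :=
        cdf_lt_of_lt_qf hFmono (hFb hαpos) (by linarith only [hh0] : q - hh < q)
      have hdn : q - M*hh ≤ qW := by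
        refine le_qf hGmono (hGne hαu) ?_
        have h1 := cdfW_le μ Z U (q-M*hh) hh
        have h2 : q - M*hh + hh = q-(M-1)*hh := by ring
        rw [h2] at h1
        rw [hGdef]
        linarith only [h1, hgap2, hinc2.symm.le, hδX, hX0, hFq_h]
      have hend : |qW/q - 1| ≤ M * q^(-κ) := by
        have h1 : |qW - q| ≤ M*hh := abs_le.2 ⟨by linarith only [hdn], by linarith only [hup]⟩
        have h2 : |qW/q - 1| = |qW - q|/q := by
          rw [show qW/q - 1 = (qW - q)/q by field_simp, abs_div, abs_of_pos hqpos]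
        rw [h2]
        calc |qW - q|/q ≤ (M*hh)/q := by
              exact div_le_div_of_nonneg_right h1 hqpos.le
          _ = M * (hh/q) := by ring
          _ = M * q^(-κ) := by rw [hhdef, rpow_id3 q κ hqpos]
      have htr : a * q^(-c) ≤ 1 - α := by
        have h1 := htrigP α q hαu (le_of_eq hqdef.symm) (by linarith only [hx₀pos, hR₀x, hqR])
        rwa [rpow_id2 q c₀ c hqpos, ← hadef] at h1
      have hqc : q^(-c) ≤ (1-α)/a := by
        rw [le_div_iff₀ hapos]; linarith only [htr, mul_comm a (q^(-c))]
      have hfin : q^(-κ) ≤ ((1-α)/a)^γ := by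
        rw [rpow_id4 q c κ hqpos hcne, ← hγdef]
        exact Real.rpow_le_rpow (Real.rpow_pos_of_pos hqpos _).le hqc hγpos.le
      calc |qW/q - 1| ≤ M * q^(-κ) := hend
        _ ≤ M * ((1-α)/a)^γ := mul_le_mul_of_nonneg_left hfin hMpos.le
        _ = Kc * (1-α)^γ := by
            rw [Real.div_rpow hεpos.le hapos.le, hKcdef]; ring
        _ ≤ K * (1-α)^γ := mul_le_mul_of_nonneg_right hKKc (Real.rpow_nonneg hεpos.le _)
    · -- compact regime
      have hqR' : q ≤ R₀ := le_of_lt (lt_of_not_ge hqR)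
      have htr : ε₂ ≤ 1 - α := by
        have h1 := htrigP α R₀ hαu (le_of_eq_of_le hqdef.symm hqR') (by linarith only [hx₀pos, hR₀x])
        rwa [← hε₂def] at h1
      have hαβ : α ≤ β := le_trans (by linarith only [htr]) (le_max_right _ _)
      have hupW : qW ≤ qf G β := qf_mono hGmono (hGb hαpos) (hGne hβlt1) hαβ
      have hdoW : qf G α₀ ≤ qW := qf_mono hGmono (hGb hα₀.1) (hGne hαu) hαl
      have habs : |qW| ≤ Qp := by
        rw [abs_le]
        constructor
        · calc -Qp ≤ -|qf G α₀| := neg_le_neg (le_max_left _ _)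
            _ ≤ qf G α₀ := neg_abs_le _
            _ ≤ qW := hdoW
        · calc qW ≤ qf G β := hupW
            _ ≤ |qf G β| := le_abs_self _
            _ ≤ Qp := le_max_right _ _
      have hratio : |qW/q - 1| ≤ B₁ := by
        have h1 : |qW/q - 1| ≤ |qW/q| + 1 := by
          calc |qW/q - 1| = |qW/q + (-1)| := by ring_nf
            _ ≤ |qW/q| + |(-1:ℝ)| := abs_add_le _ _
            _ = |qW/q| + 1 := by norm_num
        have h2 : |qW/q| = |qW|/q := by rw [abs_div, abs_of_pos hqpos]
        have h3 : |qW|/q ≤ Qp/qZ₀ := div_le_div₀ hQp0 habs hq0 hq₀q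
        rw [hB₁def]
        rw [h2] at h1
        linarith only [h1, h3]
      have hεγ : ε₂^γ ≤ (1-α)^γ := Real.rpow_le_rpow hε₂pos.le htr hγpos.le
      calc |qW/q - 1| ≤ B₁ := hratio
        _ = B₁/ε₂^γ * ε₂^γ := by field_simp
        _ ≤ K * (1-α)^γ := mul_le_mul hKB₁ hεγ hε₂γpos.le hKpos.le
  · -- negative (left-tail) side
    intro α hα
    obtain ⟨hαl, hαu⟩ := hα
    have hαlt1 : α < 1 := lt_of_le_of_lt hαu hα₁.2
    rw [hγeq]
    set q : ℝ := qf (cdfRV μ Z) α with hqdef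
    have hqq₁ : q ≤ -p₁ := by
      rw [hp₁def, neg_neg]
      exact qf_mono hFmono (hFb hαl) (hFne hα₁.2) hαu
    have hqneg : q < 0 := lt_of_le_of_lt hqq₁ (by linarith only [hp₁pos])
    set p : ℝ := -q with hpdef
    have hppos : 0 < p := by rw [hpdef]; linarith only [hqneg]
    have hpp₁ : p₁ ≤ p := by rw [hpdef]; linarith only [hqq₁]
    set qW : ℝ := qf G α with hqWdef
    by_cases hqR : R₀ ≤ p
    · -- core regime
      obtain ⟨hT₀h, h2M⟩ := hcore p hqR
      set hh : ℝ := p ^ (1-κ) with hhdef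
      have hh0 : 0 < hh := Real.rpow_pos_of_pos hppos _
      set δ : ℝ := (μ {ω | hh < |U ω|}).toReal with hδdef
      have hδ0 : 0 ≤ δ := ENNReal.toReal_nonneg
      set X : ℝ := p ^ (-(c+κ)) with hXdef
      have hX0 : 0 < X := Real.rpow_pos_of_pos hppos _
      have hδX : δ ≤ C * X := by
        have h1 := hδt hh hT₀h
        have h2 : hh ^ (-d) = X := by
          rw [hhdef, hXdef, ← Real.rpow_mul hppos.le]
          congr 1
          have : (1-κ)*(-d) = -((1-κ)*d) := by ring
          rw [this, hdκ]
        rwa [h2] at h1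
      have hm : (0:ℝ) ≤ c₀/(2*p)^(1+c) := by positivity
      have hMh : 2*M*hh ≤ p := h2M
      have hqp : q = -p := by rw [hpdef]; ring
      have hmem1 : ∀ y ∈ Ioc (q+hh) (q+(M-1)*hh), c₀/(2*p)^(1+c) ≤ f y := by
        intro y hy
        have hy1 : q + hh < y := hy.1
        have hy2 : y ≤ q + (M-1)*hh := hy.2
        have hyneg : y < 0 := by linarith only [hy2, hMh, hh0, hqp, hppos]
        have hyabs : |y| = -y := abs_of_neg hyneg
        refine hfd y (2*p) ?_ ?_
        · rw [hyabs]; linarith only [hy2, hMh, hh0, hqp, hR₀x, hqR, hx₀pos]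
        · rw [hyabs]; linarith only [hy1, hh0, hqp, hppos]
      have hgap1 := cdfZ_gap μ Z f hZm hdens (u := q+hh) (v := q+(M-1)*hh)
        (by linarith only [mul_le_mul_of_nonneg_right hM2 hh0.le, hh0]) hm hmem1
      have h2c : (2:ℝ)^(1+c) * 2^(-(1+c)) = 1 := by
        rw [Real.rpow_neg (by norm_num : (0:ℝ) ≤ 2)]
        exact mul_inv_cancel₀ (Real.rpow_pos_of_pos two_pos _).ne'
      have hinc : c₀/(2*p)^(1+c) * ((q+(M-1)*hh) - (q+hh)) = (C+1)*X := by
        have e1 := rpow_id1 p c κ hppos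
        calc c₀/(2*p)^(1+c) * ((q+(M-1)*hh) - (q+hh))
            = c₀*(M-2) * (hh/(2*p)^(1+c)) := by ring
          _ = (2^(1+c)*(C+1)) * (2^(-(1+c)) * X) := by
              rw [hhdef, hXdef, e1, hMc₀]
          _ = (2^(1+c)*2^(-(1+c)))*((C+1)*X) := by ring
          _ = (C+1)*X := by rw [h2c, one_mul]
      have hαpos : 0 < α := hαl
      have hFh : α ≤ cdfRV μ Z (q+hh) := lt_qf_cdf hFmono (hFne hαlt1) hh0
      have hup : qW ≤ q + M*hh := by
        refine qf_le hGmono (hGb hαpos) ?_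
        have h1 := cdfW_ge μ Z U (q+M*hh) hh
        have h2 : q + M*hh - hh = q + (M-1)*hh := by ring
        rw [h2] at h1
        rw [hGdef]
        linarith only [h1, hgap1, hinc.symm.le, hδX, hX0, hFh]
      have hmem2 : ∀ y ∈ Ioc (q-(M-1)*hh) (q-hh), c₀/(2*p)^(1+c) ≤ f y := by
        intro y hy
        have hy1 : q - (M-1)*hh < y := hy.1
        have hy2 : y ≤ q - hh := hy.2
        have hyneg : y < 0 := by linarith only [hy2, hh0, hqp, hppos]
        have hyabs : |y| = -y := abs_of_neg hyneg
        refine hfd y (2*p) ?_ ?_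
        · rw [hyabs]; linarith only [hy2, hh0, hqp, hR₀x, hqR, hx₀pos]
        · rw [hyabs]; linarith only [hy1, hMh, hh0, hqp, hppos]
      have hgap2 := cdfZ_gap μ Z f hZm hdens (u := q-(M-1)*hh) (v := q-hh)
        (by linarith only [mul_le_mul_of_nonneg_right hM2 hh0.le, hh0]) hm hmem2
      have hinc2 : c₀/(2*p)^(1+c) * ((q-hh) - (q-(M-1)*hh)) = (C+1)*X := by
        have e1 := rpow_id1 p c κ hppos
        calc c₀/(2*p)^(1+c) * ((q-hh) - (q-(M-1)*hh))
            = c₀*(M-2) * (hh/(2*p)^(1+c)) := by ring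
          _ = (2^(1+c)*(C+1)) * (2^(-(1+c)) * X) := by
              rw [hhdef, hXdef, e1, hMc₀]
          _ = (2^(1+c)*2^(-(1+c)))*((C+1)*X) := by ring
          _ = (C+1)*X := by rw [h2c, one_mul]
      have hFq_h : cdfRV μ Z (q-hh) < α :=
        cdf_lt_of_lt_qf hFmono (hFb hαpos) (by linarith only [hh0] : q - hh < q)
      have hdn : q - M*hh ≤ qW := by
        refine le_qf hGmono (hGne hαlt1) ?_
        have h1 := cdfW_le μ Z U (q-M*hh) hh
        have h2 : q - M*hh + hh = q-(M-1)*hh := by ring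
        rw [h2] at h1
        rw [hGdef]
        linarith only [h1, hgap2, hinc2.symm.le, hδX, hX0, hFq_h]
      have hend : |qW/q - 1| ≤ M * p^(-κ) := by
        have h1 : |qW - q| ≤ M*hh := abs_le.2 ⟨by linarith only [hdn], by linarith only [hup]⟩
        have h2 : |qW/q - 1| = |qW - q|/p := by
          rw [show qW/q - 1 = (qW - q)/q by field_simp [hqneg.ne], abs_div, abs_of_neg hqneg, hpdef]
        rw [h2]
        calc |qW - q|/p ≤ (M*hh)/p := by
              exact div_le_div_of_nonneg_right h1 hppos.le
          _ = M * (hh/p) := by ring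
          _ = M * p^(-κ) := by rw [hhdef, rpow_id3 p κ hppos]
      have htr : a * p^(-c) ≤ α := by
        have hq2p : -(2*p) < q := by rw [hqp]; linarith only [hppos]
        have h1 := htrigN α p hαl hq2p (by linarith only [hx₀pos, hR₀x, hqR])
        rwa [rpow_id2 p c₀ c hppos, ← hadef] at h1
      have hqc : p^(-c) ≤ α/a := by
        rw [le_div_iff₀ hapos]; linarith only [htr, mul_comm a (p^(-c))]
      have hfin : p^(-κ) ≤ (α/a)^γ := by
        rw [rpow_id4 p c κ hppos hcne, ← hγdef]
        exact Real.rpow_le_rpow (Real.rpow_pos_of_pos hppos _).le hqc hγpos.le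
      calc |qW/q - 1| ≤ M * p^(-κ) := hend
        _ ≤ M * (α/a)^γ := mul_le_mul_of_nonneg_left hfin hMpos.le
        _ = Kc * α^γ := by
            rw [Real.div_rpow hαl.le hapos.le, hKcdef]; ring
        _ ≤ K * α^γ := mul_le_mul_of_nonneg_right hKKc (Real.rpow_nonneg hαl.le _)
    · -- compact regime
      have hqR' : p ≤ R₀ := le_of_lt (lt_of_not_ge hqR)
      have htr : ε₂ ≤ α := by
        have hq2R : -(2*R₀) < q := by
          have : q = -p := by rw [hpdef]; ring
          rw [this]; linarith only [hqR', hR₀pos]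
        have h1 := htrigN α R₀ hαl hq2R (by linarith only [hx₀pos, hR₀x])
        rwa [← hε₂def] at h1
      have hβ'α : β' ≤ α := le_trans (min_le_right _ _) htr
      have hupW : qW ≤ qf G α₁ := qf_mono hGmono (hGb hαl) (hGne hα₁.2) hαu
      have hdoW : qf G β' ≤ qW := qf_mono hGmono (hGb hβ'pos) (hGne hαlt1) hβ'α
      have habs : |qW| ≤ Qn := by
        rw [abs_le]
        constructor
        · calc -Qn ≤ -|qf G β'| := neg_le_neg (le_max_left _ _)
            _ ≤ qf G β' := neg_abs_le _
            _ ≤ qW := hdoW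
        · calc qW ≤ qf G α₁ := hupW
            _ ≤ |qf G α₁| := le_abs_self _
            _ ≤ Qn := le_max_right _ _
      have hratio : |qW/q - 1| ≤ B₂ := by
        have h1 : |qW/q - 1| ≤ |qW/q| + 1 := by
          calc |qW/q - 1| = |qW/q + (-1)| := by ring_nf
            _ ≤ |qW/q| + |(-1:ℝ)| := abs_add_le _ _
            _ = |qW/q| + 1 := by norm_num
        have h2 : |qW/q| = |qW|/p := by rw [abs_div, abs_of_neg hqneg, hpdef]
        have h3 : |qW|/p ≤ Qn/p₁ := div_le_div₀ hQn0 habs hp₁pos hpp₁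
        rw [hB₂def]
        rw [h2] at h1
        linarith only [h1, h3]
      have hεγ : ε₂^γ ≤ α^γ := Real.rpow_le_rpow hε₂pos.le htr hγpos.le
      calc |qW/q - 1| ≤ B₂ := hratio
        _ = B₂/ε₂^γ * ε₂^γ := by field_simp
        _ ≤ K * α^γ := mul_le_mul hKB₂ hεγ hε₂γpos.le hKpos.le
end
end

section
/- Fix ε ∈ (0, 1/2) and let D denote the set of cumulative distribution functions of integrable, mean-zero, nondegenerate probability distributions on ℝ. Then the map (α, F, G) ↦ R(α, F, G) = (∫_α^1 F⁻¹(t) dt)/(∫_α^1 G⁻¹(t) dt) is continuous on [ε, 1−ε] × D × D with respect to the metric d'((α, F, G), (α', F', G')) = |α − α'| + W₁(F, F') + W₁(G, G'), where W₁ denotes the 1-Wasserstein distance between distributions on ℝ. -/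
/-!
The quantile function `q = F⁻¹` pushes Lebesgue measure on `(0, 1)` forward to the distribution,
and Tonelli gives `∫₀¹ |F⁻¹ - F'⁻¹| = W₁(F, F')`. Hence numerator and denominator of `R` move by
at most `W₁ + C |α - α'|`, where `C` bounds the monotone quantile function on `[ε, 1 - ε]`. The
denominator is positive: a monotone `q` with `∫₀¹ q = 0` has `∫_α^1 q > 0` unless `q` is a.e.
constant, i.e. unless the distribution is a point mass.
-/

open MeasureTheory ProbabilityTheory Filter Set

noncomputable section

/-- The cumulative distribution function of a Borel measure on `ℝ`. -/
def cdfM (ν : Measure ℝ) : ℝ → ℝ := fun t => (ν (Set.Iic t)).toReal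

/-- The ratio of integrated quantiles `R(α, F, G)`, for measures. -/
def RM (α : ℝ) (ν₁ ν₂ : Measure ℝ) : ℝ :=
  (∫ t in α..1, qf (cdfM ν₁) t) / (∫ t in α..1, qf (cdfM ν₂) t)

/-- The 1-Wasserstein distance between two distributions on `ℝ`, expressed as the
`L¹`-distance between their cdfs: `W₁(F, F') = ∫ |F(t) − F'(t)| dt`. -/
def W1 (ν ν' : Measure ℝ) : ℝ := ∫ t : ℝ, |cdfM ν t - cdfM ν' t|

/-- The set `D` of (cdfs of) integrable, mean-zero, nondegenerate distributions. -/
def Dset : Set (Measure ℝ) :=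
  {ν | IsProbabilityMeasure ν ∧ Integrable (fun x => x) ν ∧ (∫ x, x ∂ν) = 0 ∧
    ∀ a : ℝ, ν ≠ Measure.dirac a}

section Quantile

variable {ν : Measure ℝ} [IsProbabilityMeasure ν]

lemma cdfM_eq_cdf : cdfM ν = cdf ν := by
  ext x
  rw [cdfM, cdf_eq_real, measureReal_def]

lemma measurable_cdfM : Measurable (cdfM ν) := by
  rw [cdfM_eq_cdf]
  exact (monotone_cdf ν).measurable

/-- Right continuity of the cdf makes the infimum defining `qf` attained. -/
lemma qf_cdfM_le_iff {t x : ℝ} (ht : t ∈ Ioo 0 1) : qf (cdfM ν) t ≤ x ↔ t ≤ cdfM ν x := by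
  rw [cdfM_eq_cdf]
  set S := {x | t ≤ cdf ν x}
  have hne : S.Nonempty := ((tendsto_cdf_atTop ν).eventually (eventually_ge_nhds ht.2)).exists
  have hbdd : BddBelow S := by
    obtain ⟨B, hB⟩ := eventually_atBot.1
      ((tendsto_cdf_atBot ν).eventually (eventually_lt_nhds ht.1))
    exact ⟨B, fun x hx => le_of_not_gt fun hxB => (hB x hxB.le).not_ge hx⟩
  have hmem : sInf S ∈ S := by
    refine ge_of_tendsto (((cdf ν).right_continuous _).mono Ioi_subset_Ici_self) ?_
    filter_upwards [self_mem_nhdsWithin] with y hy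
    obtain ⟨z, hzS, hzy⟩ := exists_lt_of_csInf_lt hne hy
    exact hzS.trans ((cdf ν).mono hzy.le)
  exact ⟨fun h => hmem.trans ((cdf ν).mono h), fun h => csInf_le hbdd h⟩

lemma monotoneOn_qf_cdfM : MonotoneOn (qf (cdfM ν)) (Ioo 0 1) := fun _ hs _ ht hst =>
  (qf_cdfM_le_iff hs).2 (hst.trans ((qf_cdfM_le_iff ht).1 le_rfl))

lemma aemeasurable_qf_cdfM : AEMeasurable (qf (cdfM ν)) (volume.restrict (Ioo 0 1)) :=
  aemeasurable_restrict_of_monotoneOn measurableSet_Ioo monotoneOn_qf_cdfM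

lemma map_qf_cdfM : (volume.restrict (Ioo 0 1)).map (qf (cdfM ν)) = ν := by
  refine Measure.ext_of_Iic _ _ fun x => ?_
  have hpre : qf (cdfM ν) ⁻¹' Iic x ∩ Ioo 0 1 = Iic (cdfM ν x) ∩ Ioo 0 1 := by
    ext t
    simp only [mem_inter_iff, mem_preimage, mem_Iic, and_congr_left_iff]
    exact qf_cdfM_le_iff
  rw [Measure.map_apply_of_aemeasurable aemeasurable_qf_cdfM measurableSet_Iic,
    Measure.restrict_apply' measurableSet_Ioo, hpre, ← Measure.restrict_apply' measurableSet_Ioo,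
    Measure.restrict_congr_set Ioo_ae_eq_Ioc, Measure.restrict_apply' measurableSet_Ioc,
    Iic_inter_Ioc_of_le (cdfM_eq_cdf (ν := ν) ▸ cdf_le_one ν x), Real.volume_Ioc, sub_zero,
    cdfM_eq_cdf, ofReal_cdf]

lemma integrableOn_qf_cdfM (hν : Integrable (fun x => x) ν) :
    IntegrableOn (qf (cdfM ν)) (Ioo 0 1) := by
  rw [← map_qf_cdfM (ν := ν)] at hν
  exact (integrable_map_measure aestronglyMeasurable_id aemeasurable_qf_cdfM).1 hν

lemma integral_qf_cdfM : ∫ t in Ioo 0 1, qf (cdfM ν) t = ∫ x, x ∂ν := by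
  conv_rhs => rw [← map_qf_cdfM (ν := ν)]
  exact (integral_map aemeasurable_qf_cdfM aestronglyMeasurable_id).symm

lemma intervalIntegrable_qf_cdfM (hν : Integrable (fun x => x) ν) {a b : ℝ}
    (ha : a ∈ Icc 0 1) (hb : b ∈ Icc 0 1) : IntervalIntegrable (qf (cdfM ν)) volume a b := by
  rw [intervalIntegrable_iff]
  exact ((integrableOn_qf_cdfM hν).congr_set_ae Ioo_ae_eq_Ioc.symm).mono_set
    (Ioc_subset_Ioc (le_min ha.1 hb.1) (max_le ha.2 hb.2))

end Quantile

open scoped symmDiff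

lemma volume_Ici_symmDiff_Ici (u v : ℝ) : volume (Ici u ∆ Ici v) = ENNReal.ofReal |u - v| := by
  wlog h : u ≤ v generalizing u v
  · rw [symmDiff_comm, abs_sub_comm]
    exact this v u (le_of_not_ge h)
  rw [Set.symmDiff_def, Ici_sdiff_Ici, Ici_sdiff_Ici, Ico_eq_empty_of_le h, union_empty,
    Real.volume_Ico, abs_sub_comm, abs_of_nonneg (sub_nonneg.2 h)]

lemma restrict_Ioo_Iic_symmDiff_Iic {u v : ℝ} (hu : u ∈ Icc 0 1) (hv : v ∈ Icc 0 1) :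
    volume.restrict (Ioo 0 1) (Iic u ∆ Iic v) = ENNReal.ofReal |u - v| := by
  wlog h : u ≤ v generalizing u v
  · rw [symmDiff_comm, abs_sub_comm]
    exact this hv hu (le_of_not_ge h)
  rw [Set.symmDiff_def, Iic_sdiff_Iic, Iic_sdiff_Iic, Ioc_eq_empty_of_le h, empty_union,
    Measure.restrict_congr_set Ioo_ae_eq_Icc,
    Measure.restrict_eq_self _ (Ioc_subset_Icc_self.trans (Icc_subset_Icc hu.1 hv.2)),
    Real.volume_Ioc, abs_sub_comm, abs_of_nonneg (sub_nonneg.2 h)]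

section TwoMeasures

variable (ν ν' : Measure ℝ) [IsProbabilityMeasure ν] [IsProbabilityMeasure ν']

/-- Both sides are the area of the region between the graphs of the two cdfs, sliced
horizontally on the left and vertically on the right (Tonelli). -/
lemma lintegral_abs_qf_sub_qf :
    ∫⁻ t in Ioo 0 1, ENNReal.ofReal |qf (cdfM ν) t - qf (cdfM ν') t|
      = ∫⁻ x, ENNReal.ofReal |cdfM ν x - cdfM ν' x| := by
  set A : Set (ℝ × ℝ) := {p | p.1 ≤ cdfM ν p.2} ∆ {p | p.1 ≤ cdfM ν' p.2}
  have hA : MeasurableSet A :=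
    (measurableSet_le measurable_fst (measurable_cdfM.comp measurable_snd)).symmDiff
      (measurableSet_le measurable_fst (measurable_cdfM.comp measurable_snd))
  have hslice : ∀ t ∈ Ioo (0 : ℝ) 1,
      Prod.mk t ⁻¹' A = Ici (qf (cdfM ν) t) ∆ Ici (qf (cdfM ν') t) := by
    intro t ht
    ext x
    simp only [A, preimage_symmDiff, mem_symmDiff, mem_preimage, mem_ofPred_eq, mem_Ici,
      qf_cdfM_le_iff ht]
  have hcdf : ∀ (μ : Measure ℝ) [IsProbabilityMeasure μ] (x : ℝ), cdfM μ x ∈ Icc 0 1 :=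
    fun μ _ x => cdfM_eq_cdf (ν := μ) ▸ ⟨cdf_nonneg μ x, cdf_le_one μ x⟩
  calc ∫⁻ t in Ioo 0 1, ENNReal.ofReal |qf (cdfM ν) t - qf (cdfM ν') t|
      = (volume.restrict (Ioo 0 1)).prod volume A := by
        rw [Measure.prod_apply hA]
        refine setLIntegral_congr_fun measurableSet_Ioo fun t ht => ?_
        rw [hslice t ht, volume_Ici_symmDiff_Ici]
    _ = ∫⁻ x, ENNReal.ofReal |cdfM ν x - cdfM ν' x| := by
        rw [Measure.prod_apply_symm hA]
        exact lintegral_congr fun x => restrict_Ioo_Iic_symmDiff_Iic (hcdf ν x) (hcdf ν' x)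

lemma integral_abs_qf_sub_qf :
    ∫ t in Ioo 0 1, |qf (cdfM ν) t - qf (cdfM ν') t| = W1 ν ν' := by
  have hq : AEMeasurable (fun t => |qf (cdfM ν) t - qf (cdfM ν') t|) (volume.restrict (Ioo 0 1)) :=
    (aemeasurable_qf_cdfM.sub aemeasurable_qf_cdfM).abs
  have hF : Measurable fun x => |cdfM ν x - cdfM ν' x| := (measurable_cdfM.sub measurable_cdfM).abs
  rw [W1, integral_eq_lintegral_of_nonneg_ae (.of_forall fun _ => abs_nonneg _)
      hq.aestronglyMeasurable,
    integral_eq_lintegral_of_nonneg_ae (.of_forall fun _ => abs_nonneg _)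
      hF.aestronglyMeasurable,
    lintegral_abs_qf_sub_qf]

lemma abs_intervalIntegral_qf_sub_qf_le_W1 {a : ℝ} (ha : a ∈ Icc 0 1)
    (hν : Integrable (fun x => x) ν) (hν' : Integrable (fun x => x) ν') :
    |(∫ t in a..1, qf (cdfM ν) t) - ∫ t in a..1, qf (cdfM ν') t| ≤ W1 ν ν' := by
  have hI := intervalIntegrable_qf_cdfM hν ha (right_mem_Icc.2 zero_le_one)
  have hI' := intervalIntegrable_qf_cdfM hν' ha (right_mem_Icc.2 zero_le_one)
  have hint := ((integrableOn_qf_cdfM hν).sub (integrableOn_qf_cdfM hν')).abs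
  rw [← intervalIntegral.integral_sub hI hI', ← integral_abs_qf_sub_qf]
  calc |∫ t in a..1, qf (cdfM ν) t - qf (cdfM ν') t|
      ≤ ∫ t in a..1, |qf (cdfM ν) t - qf (cdfM ν') t| :=
        intervalIntegral.abs_integral_le_integral_abs ha.2
    _ = ∫ t in Ioo a 1, |qf (cdfM ν) t - qf (cdfM ν') t| := by
        rw [intervalIntegral.integral_of_le ha.2, integral_Ioc_eq_integral_Ioo]
    _ ≤ ∫ t in Ioo 0 1, |qf (cdfM ν) t - qf (cdfM ν') t| :=
        setIntegral_mono_set hint (.of_forall fun _ => abs_nonneg _)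
          (Ioo_subset_Ioo_left ha.1).eventuallyLE

lemma abs_intervalIntegral_qf_sub_le {ε a a' : ℝ} (hε : 0 < ε) (ha : a ∈ Icc ε (1 - ε))
    (ha' : a' ∈ Icc ε (1 - ε)) (hν : Integrable (fun x => x) ν) :
    |(∫ t in a'..1, qf (cdfM ν) t) - ∫ t in a..1, qf (cdfM ν) t|
      ≤ max |qf (cdfM ν) ε| |qf (cdfM ν) (1 - ε)| * |a - a'| := by
  have hIcc : Icc ε (1 - ε) ⊆ Icc 0 1 := Icc_subset_Icc hε.le (by linarith)
  have hIoo : Icc ε (1 - ε) ⊆ Ioo 0 1 := fun x hx => ⟨hε.trans_le hx.1, by linarith [hx.2]⟩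
  have hsplit := intervalIntegral.integral_add_adjacent_intervals
    (intervalIntegrable_qf_cdfM hν (hIcc ha') (hIcc ha))
    (intervalIntegrable_qf_cdfM hν (hIcc ha) (right_mem_Icc.2 zero_le_one))
  rw [← hsplit, add_sub_cancel_right, ← Real.norm_eq_abs]
  refine intervalIntegral.norm_integral_le_of_norm_le_const fun x hx => ?_
  have hx' : x ∈ Icc ε (1 - ε) :=
    ⟨(le_min ha'.1 ha.1).trans hx.1.le, hx.2.trans (max_le ha'.2 ha.2)⟩
  have hε' : ε ∈ Icc ε (1 - ε) := ⟨le_rfl, hx'.1.trans hx'.2⟩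
  have hε'' : 1 - ε ∈ Icc ε (1 - ε) := ⟨hx'.1.trans hx'.2, le_rfl⟩
  exact abs_le_max_abs_abs (monotoneOn_qf_cdfM (hIoo hε') (hIoo hx') hx'.1)
    (monotoneOn_qf_cdfM (hIoo hx') (hIoo hε'') hx'.2)

lemma abs_intervalIntegral_qf_sub_qf_le {ε a a' : ℝ} (hε : 0 < ε) (ha : a ∈ Icc ε (1 - ε))
    (ha' : a' ∈ Icc ε (1 - ε)) (hν : Integrable (fun x => x) ν)
    (hν' : Integrable (fun x => x) ν') :
    |(∫ t in a'..1, qf (cdfM ν') t) - ∫ t in a..1, qf (cdfM ν) t|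
      ≤ W1 ν ν' + max |qf (cdfM ν) ε| |qf (cdfM ν) (1 - ε)| * |a - a'| := by
  have ha'01 : a' ∈ Icc 0 1 := ⟨hε.le.trans ha'.1, by linarith [ha'.2]⟩
  calc _ ≤ |(∫ t in a'..1, qf (cdfM ν') t) - ∫ t in a'..1, qf (cdfM ν) t|
        + |(∫ t in a'..1, qf (cdfM ν) t) - ∫ t in a..1, qf (cdfM ν) t| := abs_sub_le _ _ _
    _ ≤ _ := by
      rw [abs_sub_comm]
      exact add_le_add (abs_intervalIntegral_qf_sub_qf_le_W1 ν ν' ha'01 hν hν')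
        (abs_intervalIntegral_qf_sub_le ν hε ha ha' hν)

end TwoMeasures

/-- Splitting at `a`, `∫_a^1 q` is the sum of `a ∫_a^1 (q - q a) ≥ 0` and
`(1 - a) ∫_0^a (q a - q) ≥ 0`; if both vanish, `q` is a.e. constant. -/
lemma MonotoneOn.intervalIntegral_pos_or_ae_eq_const {q : ℝ → ℝ} {a : ℝ}
    (hq : MonotoneOn q (Ioo 0 1)) (hint : IntervalIntegrable q volume 0 1)
    (h0 : ∫ t in 0..1, q t = 0) (ha : a ∈ Ioo 0 1) :
    0 < ∫ t in a..1, q t ∨ ∀ᵐ t ∂volume.restrict (Ioc 0 1), q t = q a := by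
  have hI0 : IntervalIntegrable q volume 0 a :=
    hint.mono_set (uIcc_subset_uIcc left_mem_uIcc (mem_uIcc_of_le ha.1.le ha.2.le))
  have hI1 : IntervalIntegrable q volume a 1 :=
    hint.mono_set (uIcc_subset_uIcc (mem_uIcc_of_le ha.1.le ha.2.le) right_mem_uIcc)
  have hupper : 0 ≤ᵐ[volume.restrict (Ioc a 1)] fun t => a * (q t - q a) := by
    rw [← Measure.restrict_congr_set Ioo_ae_eq_Ioc]
    filter_upwards [ae_restrict_mem measurableSet_Ioo] with t ht
    exact mul_nonneg ha.1.le (sub_nonneg.2 (hq ha ⟨ha.1.trans ht.1, ht.2⟩ ht.1.le))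
  have hlower : 0 ≤ᵐ[volume.restrict (Ioc 0 a)] fun t => (1 - a) * (q a - q t) := by
    rw [← Measure.restrict_congr_set Ioo_ae_eq_Ioc]
    filter_upwards [ae_restrict_mem measurableSet_Ioo] with t ht
    exact mul_nonneg (sub_nonneg.2 ha.2.le) (sub_nonneg.2 (hq ⟨ht.1, ht.2.trans ha.2⟩ ha ht.2.le))
  have hsplit : ∫ t in a..1, q t
      = (∫ t in a..1, a * (q t - q a)) + ∫ t in 0..a, (1 - a) * (q a - q t) := by
    have hadd := intervalIntegral.integral_add_adjacent_intervals hI0 hI1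
    simp only [intervalIntegral.integral_const_mul, intervalIntegral.integral_sub hI1
      intervalIntegrable_const, intervalIntegral.integral_sub intervalIntegrable_const hI0,
      intervalIntegral.integral_const, smul_eq_mul]
    linear_combination (1 - a) * (hadd.trans h0)
  have hU : 0 ≤ ∫ t in a..1, a * (q t - q a) := by
    rw [intervalIntegral.integral_of_le ha.2.le]; exact integral_nonneg_of_ae hupper
  have hL : 0 ≤ ∫ t in 0..a, (1 - a) * (q a - q t) := by
    rw [intervalIntegral.integral_of_le ha.1.le]; exact integral_nonneg_of_ae hlower
  rcases (add_nonneg hU hL).lt_or_eq with hpos | hzero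
  · exact .inl (hsplit ▸ hpos)
  right
  obtain ⟨hU0, hL0⟩ := (add_eq_zero_iff_of_nonneg hU hL).1 hzero.symm
  have hUae := (intervalIntegral.integral_eq_zero_iff_of_le_of_nonneg_ae ha.2.le hupper
    ((hI1.sub intervalIntegrable_const).const_mul a)).1 hU0
  have hLae := (intervalIntegral.integral_eq_zero_iff_of_le_of_nonneg_ae ha.1.le hlower
    ((intervalIntegrable_const.sub hI0).const_mul (1 - a))).1 hL0
  rw [← Ioc_union_Ioc_eq_Ioc ha.1.le ha.2.le, ae_restrict_union_iff]
  constructor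
  · filter_upwards [hLae] with t ht
    have := (mul_eq_zero.1 ht).resolve_left (sub_ne_zero.2 ha.2.ne')
    linarith
  · filter_upwards [hUae] with t ht
    have := (mul_eq_zero.1 ht).resolve_left ha.1.ne'
    linarith

lemma intervalIntegral_qf_cdfM_pos {ν : Measure ℝ} [IsProbabilityMeasure ν]
    (hν : Integrable (fun x => x) ν) (hmean : ∫ x, x ∂ν = 0) (hnd : ∀ c, ν ≠ Measure.dirac c)
    {a : ℝ} (ha : a ∈ Ioo 0 1) : 0 < ∫ t in a..1, qf (cdfM ν) t := by
  have h01 : ∫ t in 0..1, qf (cdfM ν) t = 0 := by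
    rw [intervalIntegral.integral_of_le zero_le_one, integral_Ioc_eq_integral_Ioo,
      integral_qf_cdfM, hmean]
  have hint := intervalIntegrable_qf_cdfM hν (left_mem_Icc.2 zero_le_one)
    (right_mem_Icc.2 zero_le_one)
  refine (monotoneOn_qf_cdfM.intervalIntegral_pos_or_ae_eq_const hint h01 ha).resolve_right
    fun hconst => hnd (qf (cdfM ν) a) ?_
  conv_lhs => rw [← map_qf_cdfM (ν := ν)]
  rw [Measure.restrict_congr_set Ioo_ae_eq_Ioc, Measure.map_congr hconst, Measure.map_const,
    Measure.restrict_apply_univ, Real.volume_Ioc, sub_zero, ENNReal.ofReal_one, one_smul]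

/-- For fixed `ε ∈ (0, 1/2)`, the map `(α, F, G) ↦ R(α, F, G)` is
continuous on `[ε, 1-ε] × D × D` with respect to the metric
`d'((α,F,G), (α',F',G')) = |α - α'| + W₁(F,F') + W₁(G,G')`. -/
theorem stmt17 (ε : ℝ) (hε : ε ∈ Set.Ioo (0:ℝ) (1/2)) :
    ∀ α : ℝ, ∀ F G : Measure ℝ, α ∈ Set.Icc ε (1 - ε) → F ∈ Dset → G ∈ Dset →
      ∀ η : ℝ, 0 < η → ∃ δ : ℝ, 0 < δ ∧
        ∀ α' : ℝ, ∀ F' G' : Measure ℝ,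
          α' ∈ Set.Icc ε (1 - ε) → F' ∈ Dset → G' ∈ Dset →
          |α - α'| + W1 F F' + W1 G G' < δ →
          |RM α' F' G' - RM α F G| < η := by
  rintro α F G hα ⟨_, hF, -, -⟩ ⟨_, hG, hGmean, hGnd⟩ η hη
  have hαIoo : α ∈ Ioo 0 1 := ⟨hε.1.trans_le hα.1, by linarith [hα.2, hε.1]⟩
  set NF := ∫ t in α..1, qf (cdfM F) t
  set NG := ∫ t in α..1, qf (cdfM G) t
  have hNG : 0 < NG := intervalIntegral_qf_cdfM_pos hG hGmean hGnd hαIoo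
  have hcont : ContinuousAt (fun p : ℝ × ℝ => p.1 / p.2) (NF, NG) :=
    continuousAt_fst.div continuousAt_snd hNG.ne'
  obtain ⟨δ₀, hδ₀, hdiv⟩ := Metric.continuousAt_iff.1 hcont η hη
  set MF := max |qf (cdfM F) ε| |qf (cdfM F) (1 - ε)|
  set MG := max |qf (cdfM G) ε| |qf (cdfM G) (1 - ε)|
  have hMF : 0 ≤ MF := (abs_nonneg _).trans (le_max_left _ _)
  have hMG : 0 ≤ MG := (abs_nonneg _).trans (le_max_left _ _)
  refine ⟨δ₀ / (1 + MF + MG), by positivity, ?_⟩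
  rintro α' F' G' hα' ⟨_, hF', -, -⟩ ⟨_, hG', -, -⟩ hd
  have hW1F : 0 ≤ W1 F F' := integral_nonneg fun _ => abs_nonneg _
  have hW1G : 0 ≤ W1 G G' := integral_nonneg fun _ => abs_nonneg _
  have hKd : (1 + MF + MG) * (|α - α'| + W1 F F' + W1 G G') < δ₀ := by
    rwa [lt_div_iff₀ (by positivity), mul_comm] at hd
  have hnum := abs_intervalIntegral_qf_sub_qf_le F F' hε.1 hα hα' hF hF'
  have hden' := abs_intervalIntegral_qf_sub_qf_le G G' hε.1 hα hα' hG hG'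
  refine hdiv (x := (∫ t in α'..1, qf (cdfM F') t, ∫ t in α'..1, qf (cdfM G') t)) ?_
  rw [Prod.dist_eq, Real.dist_eq, Real.dist_eq]
  exact max_lt (by nlinarith [abs_nonneg (α - α')]) (by nlinarith [abs_nonneg (α - α')])
end
end
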